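/- arXiv:math/0206226 — 11 statements merged into one kernel-verified Lean document; each statement's English description precedes it below -/
import Mathlib

section
/- Let Σ be an n×n nonnegative matrix measure on ℝ. Let ρ₁ and ρ₂ be finite Borel measures on ℝ, each equivalent to Σ (i.e. for every Borel δ: ρᵢ(δ) = 0 ↔ Σ(δ) = 0), and let Ψ₁, Ψ₂ : ℝ → Matrix (Fin n) (Fin n) ℂ be Borel measurable densities, i.e. Σ(δ) = ∫_δ Ψᵢ(t) dρᵢ(t) for every Borel δ and i = 1,2. Then rank Ψ₁(t) = rank Ψ₂(t) for ρ₁-almost every t. In particular the multiplicity function N_Σ(t) := rank (dΣ/dρ)(t) is well defined up to Σ-null sets, independently of the choice of the equivalent scalar measure ρ and of the density. -/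
open MeasureTheory
open scoped ComplexOrder

/-!
Since `ρ₁` and `ρ₂` have the same null sets as `S`, they are mutually absolutely continuous,
so `c := (dρ₂/dρ₁).toReal` is finite and nonzero `ρ₁`-a.e. Changing variables in the second
density formula, `Ψ₁` and `c • Ψ₂` have the same integral over every Borel set with respect to
`ρ₁`, hence agree `ρ₁`-a.e.; multiplying a matrix by a nonzero scalar does not change its rank.
-/

/- No integrability is assumed, so the set integrals may be junk values; but on the sets where
`‖f‖, ‖g‖ ≤ k` both functions are integrable on finite-measure sets, and these sets exhaust `α`. -/
theorem ae_eq_of_forall_setIntegral_eq_of_stronglyMeasurable {α E : Type*} [MeasurableSpace α]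
    [NormedAddCommGroup E] [NormedSpace ℝ E] [CompleteSpace E] {μ : Measure α} [SigmaFinite μ]
    {f g : α → E} (hf : StronglyMeasurable f) (hg : StronglyMeasurable g)
    (hfg : ∀ s, MeasurableSet s → ∫ x in s, f x ∂μ = ∫ x in s, g x ∂μ) :
    f =ᵐ[μ] g := by
  set B : ℕ → Set α := fun k => {x | ‖f x‖ ≤ k} ∩ {x | ‖g x‖ ≤ k}
  have hB : ∀ k, MeasurableSet (B k) := fun k =>
    (measurableSet_le hf.norm.measurable measurable_const).inter
      (measurableSet_le hg.norm.measurable measurable_const)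
  have hB_cover : ⋃ k, B k = Set.univ := by
    refine Set.eq_univ_of_forall fun x => Set.mem_iUnion.2 ?_
    obtain ⟨k, hk⟩ := exists_nat_ge (max ‖f x‖ ‖g x‖)
    exact ⟨k, (le_max_left _ _).trans hk, (le_max_right _ _).trans hk⟩
  have hbdd : ∀ {h : α → E}, StronglyMeasurable h → ∀ k, (∀ x ∈ B k, ‖h x‖ ≤ k) →
      ∀ s, MeasurableSet s → (μ.restrict (B k)) s < ⊤ → IntegrableOn h s (μ.restrict (B k)) :=
    fun hh k hhk s _ hs => Measure.integrableOn_of_bounded hs.ne hh.aestronglyMeasurable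
      ((ae_restrict_mem (hB k)).filter_mono (ae_mono Measure.restrict_le_self) |>.mono hhk)
  rw [← Measure.restrict_univ (μ := μ), ← hB_cover, Filter.EventuallyEq, ae_restrict_iUnion_iff]
  intro k
  refine ae_eq_of_forall_setIntegral_eq_of_sigmaFinite
    (hbdd hf k fun x hx => hx.1) (hbdd hg k fun x hx => hx.2) fun s hs _ => ?_
  rw [Measure.restrict_restrict hs]
  exact hfg _ (hs.inter (hB k))

theorem stmt_1_general (n : ℕ)
    (S : VectorMeasure ℝ (Matrix (Fin n) (Fin n) ℂ))
    (ρ₁ ρ₂ : Measure ℝ) [IsFiniteMeasure ρ₁] [IsFiniteMeasure ρ₂]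
    (hequiv₁ : ∀ δ : Set ℝ, MeasurableSet δ → (ρ₁ δ = 0 ↔ S δ = 0))
    (hequiv₂ : ∀ δ : Set ℝ, MeasurableSet δ → (ρ₂ δ = 0 ↔ S δ = 0))
    (Ψ₁ Ψ₂ : ℝ → Matrix (Fin n) (Fin n) ℂ)
    (hΨ₁ : ∀ i j, Measurable fun t => Ψ₁ t i j)
    (hΨ₂ : ∀ i j, Measurable fun t => Ψ₂ t i j)
    (hd₁ : ∀ δ : Set ℝ, MeasurableSet δ → ∀ i j, S δ i j = ∫ t in δ, Ψ₁ t i j ∂ρ₁)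
    (hd₂ : ∀ δ : Set ℝ, MeasurableSet δ → ∀ i j, S δ i j = ∫ t in δ, Ψ₂ t i j ∂ρ₂) :
    ∀ᵐ t ∂ρ₁, (Ψ₁ t).rank = (Ψ₂ t).rank := by
  have h₂₁ : ρ₂ ≪ ρ₁ := .mk fun δ hδ h => (hequiv₂ δ hδ).2 ((hequiv₁ δ hδ).1 h)
  have h₁₂ : ρ₁ ≪ ρ₂ := .mk fun δ hδ h => (hequiv₁ δ hδ).2 ((hequiv₂ δ hδ).1 h)
  set c : ℝ → ℝ := fun t => (ρ₂.rnDeriv ρ₁ t).toReal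
  have hc : ∀ᵐ t ∂ρ₁, c t ≠ 0 := by
    filter_upwards [h₁₂.ae_le (Measure.rnDeriv_pos h₂₁), Measure.rnDeriv_lt_top ρ₂ ρ₁]
      with t h0 htop
    exact (ENNReal.toReal_pos h0.ne' htop.ne).ne'
  have hentry : ∀ i j, (fun t => Ψ₁ t i j) =ᵐ[ρ₁] fun t => c t • Ψ₂ t i j := fun i j =>
    ae_eq_of_forall_setIntegral_eq_of_stronglyMeasurable (hΨ₁ i j).stronglyMeasurable
      ((Measure.measurable_rnDeriv ρ₂ ρ₁).ennreal_toReal.smul (hΨ₂ i j)).stronglyMeasurable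
      fun δ hδ => by rw [← hd₁ δ hδ, hd₂ δ hδ, setIntegral_rnDeriv_smul h₂₁ hδ]
  filter_upwards [hc, ae_all_iff.2 fun i => ae_all_iff.2 (hentry i)] with t hct hΨ
  have hscale : Ψ₁ t = (c t : ℂ) • Ψ₂ t := by
    ext i j
    simp [hΨ i j, Complex.real_smul]
  rw [hscale, Matrix.rank_smul_of_mem_nonZeroDivisors _
    (mem_nonZeroDivisors_of_ne_zero (Complex.ofReal_ne_zero.2 hct))]

/-- **Independence of the multiplicity function from all choices.**
If `ρ₁ ∼ S` and `ρ₂ ∼ S` are finite Borel measures equivalent to an `n × n`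
nonnegative matrix measure `S`, and `Ψ₁`, `Ψ₂` are Borel measurable densities of `S`
with respect to `ρ₁`, `ρ₂` respectively, then `rank Ψ₁(t) = rank Ψ₂(t)` for
`ρ₁`-almost every `t`; hence `N_S(t) := rank (dS/dρ)(t)` is well defined mod `S`. -/
theorem stmt_1 (n : ℕ)
    (S : VectorMeasure ℝ (Matrix (Fin n) (Fin n) ℂ))
    (hpos : ∀ δ : Set ℝ, MeasurableSet δ → (S δ).PosSemidef)
    (ρ₁ ρ₂ : Measure ℝ) [IsFiniteMeasure ρ₁] [IsFiniteMeasure ρ₂]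
    (hequiv₁ : ∀ δ : Set ℝ, MeasurableSet δ → (ρ₁ δ = 0 ↔ S δ = 0))
    (hequiv₂ : ∀ δ : Set ℝ, MeasurableSet δ → (ρ₂ δ = 0 ↔ S δ = 0))
    (Ψ₁ Ψ₂ : ℝ → Matrix (Fin n) (Fin n) ℂ)
    (hΨ₁ : ∀ i j, Measurable fun t => Ψ₁ t i j)
    (hΨ₂ : ∀ i j, Measurable fun t => Ψ₂ t i j)
    (hd₁ : ∀ δ : Set ℝ, MeasurableSet δ → ∀ i j, S δ i j = ∫ t in δ, Ψ₁ t i j ∂ρ₁)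
    (hd₂ : ∀ δ : Set ℝ, MeasurableSet δ → ∀ i j, S δ i j = ∫ t in δ, Ψ₂ t i j ∂ρ₂) :
    ∀ᵐ t ∂ρ₁, (Ψ₁ t).rank = (Ψ₂ t).rank :=
  stmt_1_general n S ρ₁ ρ₂ hequiv₁ hequiv₂ Ψ₁ Ψ₂ hΨ₁ hΨ₂ hd₁ hd₂
end

section
/- Let Σ be an n×n nonnegative matrix measure on ℝ, and let Ω_Σ := { f ∈ ℂⁿ : for every Borel set δ, ⟪Σ(δ)f, f⟫ = 0 implies Σ(δ) = 0 } be the set of vectors of maximal type for Σ. Then Ω_Σ is a Gδ subset of ℂⁿ and its complement ℂⁿ \ Ω_Σ is a meagre (first category) set; in particular Ω_Σ is a dense Gδ set of second category. -/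
open MeasureTheory Matrix
open scoped ComplexOrder

/-- The set of vectors of maximal type for an `n × n` nonnegative matrix measure `S`:
those `f ∈ ℂⁿ` such that the scalar measure `μ_f : δ ↦ ⟪S(δ)f, f⟫ = f* S(δ) f`
is equivalent to `S` (since `μ_f ≪ S` always holds, this means
`⟪S(δ)f, f⟫ = 0 → S(δ) = 0`). -/
def maximalTypeSet (n : ℕ) (S : VectorMeasure ℝ (Matrix (Fin n) (Fin n) ℂ)) :
    Set (Fin n → ℂ) :=
  {f | ∀ δ : Set ℝ, MeasurableSet δ → star f ⬝ᵥ (S δ) *ᵥ f = 0 → S δ = 0}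

/-!
A vector fails to be of maximal type exactly when it lies in the kernel of some nonzero `S(δ)`.
These kernels are proper subspaces, and by finite dimensionality each lies in a maximal one.
Kernels shrink as `δ` grows, so if distinct maximal kernels are attained at `δ₁` and `δ₂`,
then `S(δ₁ ∩ δ₂) = 0`. Hence the sets at which the maximal kernels are attained are pairwise
null for the finite trace measure `δ ↦ tr S(δ)`, while each has positive measure, so there are
only countably many maximal kernels. The complement of `Ω_S` is thus a countable union of closed
proper subspaces, each nowhere dense.
-/

lemma Matrix.PosSemidef.mulVec_eq_zero_of_add_mulVec_eq_zero {m 𝕜 : Type*} [Fintype m]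
    [RCLike 𝕜] {A B : Matrix m m 𝕜} (hA : A.PosSemidef) (hB : B.PosSemidef) {x : m → 𝕜}
    (h : (A + B) *ᵥ x = 0) : A *ᵥ x = 0 := by
  rw [← hA.dotProduct_mulVec_zero_iff]
  have hsum : star x ⬝ᵥ A *ᵥ x + star x ⬝ᵥ B *ᵥ x = 0 := by
    rw [← dotProduct_add, ← add_mulVec, h, dotProduct_zero]
  exact ((add_eq_zero_iff_of_nonneg (hA.dotProduct_mulVec_nonneg x)
    (hB.dotProduct_mulVec_nonneg x)).1 hsum).1

lemma Submodule.isNowhereDense_of_ne_top {𝕜 E : Type*} [NontriviallyNormedField 𝕜]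
    [CompleteSpace 𝕜] [NormedAddCommGroup E] [NormedSpace 𝕜 E] [FiniteDimensional 𝕜 E]
    {K : Submodule 𝕜 E} (hK : K ≠ ⊤) : IsNowhereDense (K : Set E) := by
  rw [K.closed_of_finiteDimensional.isNowhereDense_iff, ← Set.not_nonempty_iff_eq_empty]
  exact fun h ↦ hK (K.eq_top_of_nonempty_interior' h)

namespace MatrixMeasure

open Function

variable {n : ℕ} {S : VectorMeasure ℝ (Matrix (Fin n) (Fin n) ℂ)}

variable (S) in
def kernels : Set (Submodule ℂ (Fin n → ℂ)) :=
  {K | ∃ δ, MeasurableSet δ ∧ S δ ≠ 0 ∧ LinearMap.ker (S δ).mulVecLin = K}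

lemma ne_top_of_mem_kernels {K : Submodule ℂ (Fin n → ℂ)} (hK : K ∈ kernels S) : K ≠ ⊤ := by
  obtain ⟨δ, -, hSδ, rfl⟩ := hK
  rw [Ne, LinearMap.ker_eq_top, ← Matrix.toLin'_apply', LinearEquiv.map_eq_zero_iff]
  exact hSδ

variable (S) in
noncomputable def traceMeasure (hpos : ∀ δ : Set ℝ, MeasurableSet δ → (S δ).PosSemidef) :
    Measure ℝ :=
  SignedMeasure.toMeasureOfZeroLE (S.mapRange (Complex.reAddGroupHom.comp
    (traceAddMonoidHom (Fin n) ℂ)) (Complex.continuous_re.comp continuous_id.matrix_trace))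
    Set.univ MeasurableSet.univ <|
      VectorMeasure.restrict_le_restrict_of_subset_le _ _ fun δ hδ _ ↦
        (Complex.nonneg_iff.1 (hpos δ hδ).trace_nonneg).1

instance (hpos : ∀ δ : Set ℝ, MeasurableSet δ → (S δ).PosSemidef) :
    IsFiniteMeasure (traceMeasure S hpos) := by
  unfold traceMeasure
  infer_instance

lemma traceMeasure_real_apply (hpos : ∀ δ : Set ℝ, MeasurableSet δ → (S δ).PosSemidef)
    {δ : Set ℝ} (hδ : MeasurableSet δ) : (traceMeasure S hpos).real δ = (S δ).trace.re := by
  simp [traceMeasure, SignedMeasure.toMeasureOfZeroLE_real_apply _ _ _ hδ]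
  rfl

lemma traceMeasure_eq_zero_iff (hpos : ∀ δ : Set ℝ, MeasurableSet δ → (S δ).PosSemidef)
    {δ : Set ℝ} (hδ : MeasurableSet δ) : traceMeasure S hpos δ = 0 ↔ S δ = 0 := by
  rw [← measureReal_eq_zero_iff, traceMeasure_real_apply hpos hδ,
    ← (hpos δ hδ).trace_eq_zero_iff]
  have him := (Complex.nonneg_iff.1 (hpos δ hδ).trace_nonneg).2
  simp [Complex.ext_iff, ← him]

lemma ker_mulVecLin_le_of_subset (hpos : ∀ δ : Set ℝ, MeasurableSet δ → (S δ).PosSemidef)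
    {δ δ' : Set ℝ} (hδ : MeasurableSet δ) (hδ' : MeasurableSet δ') (h : δ ⊆ δ') :
    LinearMap.ker (S δ').mulVecLin ≤ LinearMap.ker (S δ).mulVecLin := fun f hf ↦
  (hpos δ hδ).mulVec_eq_zero_of_add_mulVec_eq_zero (hpos _ (hδ'.diff hδ))
    (by rwa [VectorMeasure.of_add_of_sdiff hδ hδ' h])

lemma compl_maximalTypeSet_eq_biUnion_kernels
    (hpos : ∀ δ : Set ℝ, MeasurableSet δ → (S δ).PosSemidef) :
    (maximalTypeSet n S)ᶜ = ⋃ K ∈ kernels S, (K : Set (Fin n → ℂ)) := by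
  ext f
  simp only [maximalTypeSet, kernels, Set.mem_compl_iff, Set.mem_ofPred_eq, Set.mem_iUnion,
    SetLike.mem_coe, exists_prop]
  constructor
  · intro hf
    push Not at hf
    obtain ⟨δ, hδ, hf, hSδ⟩ := hf
    exact ⟨_, ⟨δ, hδ, hSδ, rfl⟩, ((hpos δ hδ).dotProduct_mulVec_zero_iff f).1 hf⟩
  · rintro ⟨_, ⟨δ, hδ, hSδ, rfl⟩, hf⟩ hmax
    exact hSδ (hmax δ hδ (((hpos δ hδ).dotProduct_mulVec_zero_iff f).2 hf))

lemma eq_ker_of_maximal (hpos : ∀ δ : Set ℝ, MeasurableSet δ → (S δ).PosSemidef)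
    {K : Submodule ℂ (Fin n → ℂ)} (hK : Maximal (· ∈ kernels S) K) {δ A : Set ℝ}
    (hδ : MeasurableSet δ) (hKδ : LinearMap.ker (S δ).mulVecLin = K) (hA : MeasurableSet A)
    (hAδ : A ⊆ δ) (hSA : S A ≠ 0) : K = LinearMap.ker (S A).mulVecLin :=
  hK.eq_of_le ⟨A, hA, hSA, rfl⟩ (hKδ ▸ ker_mulVecLin_le_of_subset hpos hA hδ hAδ)

lemma countable_setOf_maximal_kernels
    (hpos : ∀ δ : Set ℝ, MeasurableSet δ → (S δ).PosSemidef) :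
    {K | Maximal (· ∈ kernels S) K}.Countable := by
  set M := {K | Maximal (· ∈ kernels S) K}
  choose δ hδ hSδ hker using fun K : M ↦ K.2.prop
  have hdisj : Pairwise (AEDisjoint (traceMeasure S hpos) on δ) := by
    intro K₁ K₂ hne
    by_contra hA
    have hmeas := (hδ K₁).inter (hδ K₂)
    have hSA : S (δ K₁ ∩ δ K₂) ≠ 0 := (traceMeasure_eq_zero_iff hpos hmeas).not.1 hA
    exact hne <| Subtype.ext <|
      (eq_ker_of_maximal hpos K₁.2 (hδ K₁) (hker K₁) hmeas Set.inter_subset_left hSA).trans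
      (eq_ker_of_maximal hpos K₂.2 (hδ K₂) (hker K₂) hmeas Set.inter_subset_right hSA).symm
  have hpos_meas : {K : M | 0 < traceMeasure S hpos (δ K)} = Set.univ :=
    Set.eq_univ_of_forall fun K ↦
      pos_iff_ne_zero.2 ((traceMeasure_eq_zero_iff hpos (hδ K)).not.2 (hSδ K))
  have := Measure.countable_meas_pos_of_disjoint_iUnion₀
    (fun K ↦ (hδ K).nullMeasurableSet) hdisj
  rw [hpos_meas] at this
  exact Set.countable_coe_iff.1 (Set.countable_univ_iff.1 this)

lemma compl_maximalTypeSet_eq_biUnion_maximal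
    (hpos : ∀ δ : Set ℝ, MeasurableSet δ → (S δ).PosSemidef) :
    (maximalTypeSet n S)ᶜ =
      ⋃ K ∈ {K | Maximal (· ∈ kernels S) K}, (K : Set (Fin n → ℂ)) := by
  rw [compl_maximalTypeSet_eq_biUnion_kernels hpos]
  refine Set.Subset.antisymm (Set.iUnion₂_subset fun K hK f hf ↦ ?_)
    (Set.biUnion_mono (fun K hK ↦ hK.prop) fun _ _ ↦ subset_rfl)
  obtain ⟨K', hKK', hK'⟩ := exists_maximal_ge_of_wellFoundedGT _ K hK
  exact Set.mem_biUnion hK' (hKK' hf)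

end MatrixMeasure

open MatrixMeasure in
/-- **Theorem 3(a), finite-dimensional case.** For a nonnegative matrix measure `S`,
the set `Ω_S` of vectors of maximal type is a `Gδ` set whose complement is meagre
(first Baire category); in particular `Ω_S` is a dense `Gδ` set of second category. -/
theorem stmt_2 (n : ℕ)
    (S : VectorMeasure ℝ (Matrix (Fin n) (Fin n) ℂ))
    (hpos : ∀ δ : Set ℝ, MeasurableSet δ → (S δ).PosSemidef) :
    IsGδ (maximalTypeSet n S) ∧ IsMeagre (maximalTypeSet n S)ᶜ ∧
      Dense (maximalTypeSet n S) := by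
  have hcount := countable_setOf_maximal_kernels hpos
  have hmeagre : IsMeagre (maximalTypeSet n S)ᶜ := by
    rw [compl_maximalTypeSet_eq_biUnion_maximal hpos]
    exact isMeagre_biUnion hcount fun K hK ↦
      (Submodule.isNowhereDense_of_ne_top (ne_top_of_mem_kernels hK.prop)).isMeagre
  refine ⟨?_, hmeagre, dense_of_mem_residual (compl_compl (maximalTypeSet n S) ▸ hmeagre)⟩
  rw [← compl_compl (maximalTypeSet n S), compl_maximalTypeSet_eq_biUnion_maximal hpos,
    Set.compl_iUnion₂]
  exact .biInter_of_isOpen hcount fun K _ ↦ K.closed_of_finiteDimensional.isOpen_compl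
end

section
/- Let Σ be an n×n nonnegative matrix measure on ℝ, and let Ω_Σ := { f ∈ ℂⁿ : for every Borel set δ, ⟪Σ(δ)f, f⟫ = 0 implies Σ(δ) = 0 } be the set of vectors of maximal type for Σ. Then the complement ℂⁿ \ Ω_Σ has Lebesgue measure zero (with respect to the Lebesgue/Haar measure on ℂⁿ ≅ ℝ^{2n}). -/
/-!
Let `τ` be the trace measure `δ ↦ Re tr S(δ)` and `W` the matrix of Radon–Nikodym derivatives
of the entries of `S` with respect to `τ`, so that `S(δ) = ∫_δ W dτ`. For `τ`-a.e. `t` the real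
quadratic form `f ↦ Re ⟪W(t) f, f⟫` is nonnegative and `W(t)` has trace `1`; hence its zero set is
a proper real subspace of `ℂⁿ` (the kernel of `W(t) + W(t)ᴴ`) and is Lebesgue-null. By Fubini,
for a.e. `f` the density `Re ⟪W(·) f, f⟫` of `δ ↦ ⟪S(δ) f, f⟫` vanishes only on a `τ`-null set, and
then `⟪S(δ) f, f⟫ = 0` forces `τ(δ) = 0`, i.e. `S(δ) = 0`.
-/

open MeasureTheory Matrix
open scoped ComplexOrder

namespace Matrix
variable {ι : Type*} [Fintype ι]

lemma PosSemidef.re_trace_nonneg {A : Matrix ι ι ℂ}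
    (hA : A.PosSemidef) : 0 ≤ A.trace.re :=
  (Complex.le_def.mp hA.trace_nonneg).1

lemma star_dotProduct_conjTranspose_mulVec (A : Matrix ι ι ℂ) (f : ι → ℂ) :
    star f ⬝ᵥ Aᴴ *ᵥ f = star (star f ⬝ᵥ A *ᵥ f) := by
  rw [dotProduct_mulVec, vecMul_conjTranspose, star_star, star_dotProduct]

-- `A` need not be Hermitian: its real quadratic form is half that of the Hermitian matrix `A + Aᴴ`.
lemma posSemidef_add_conjTranspose (A : Matrix ι ι ℂ)
    (hA : ∀ f, 0 ≤ (star f ⬝ᵥ A *ᵥ f).re) : (A + Aᴴ).PosSemidef := by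
  refine .of_dotProduct_mulVec_nonneg (isHermitian_add_transpose_self A) fun f => ?_
  rw [add_mulVec, dotProduct_add, star_dotProduct_conjTranspose_mulVec, Complex.star_def,
    Complex.add_conj]
  exact_mod_cast mul_nonneg zero_le_two (hA f)

lemma re_dotProduct_mulVec_eq_zero_iff (A : Matrix ι ι ℂ)
    (hA : ∀ f, 0 ≤ (star f ⬝ᵥ A *ᵥ f).re) (f : ι → ℂ) :
    (star f ⬝ᵥ A *ᵥ f).re = 0 ↔ (A + Aᴴ) *ᵥ f = 0 := by
  rw [← (posSemidef_add_conjTranspose A hA).dotProduct_mulVec_zero_iff, add_mulVec,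
    dotProduct_add, star_dotProduct_conjTranspose_mulVec, Complex.star_def, Complex.add_conj]
  simp

lemma addHaar_setOf_re_dotProduct_mulVec_eq_zero (A : Matrix ι ι ℂ)
    (hA : ∀ f, 0 ≤ (star f ⬝ᵥ A *ᵥ f).re) (hA₀ : A + Aᴴ ≠ 0)
    (ν : Measure (ι → ℂ)) [ν.IsAddHaarMeasure] :
    ν {f | (star f ⬝ᵥ A *ᵥ f).re = 0} = 0 := by
  have hker : {f | (star f ⬝ᵥ A *ᵥ f).re = 0} =
      (LinearMap.ker ((A + Aᴴ).mulVecLin.restrictScalars ℝ) : Set (ι → ℂ)) := by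
    ext f
    simp only [Set.mem_ofPred_eq, SetLike.mem_coe, LinearMap.mem_ker,
      LinearMap.coe_restrictScalars, mulVecLin_apply, re_dotProduct_mulVec_eq_zero_iff A hA]
  rw [hker]
  refine Measure.addHaar_submodule ν _ fun htop => hA₀ (ext_iff_mulVec.mpr fun f => ?_)
  simpa [add_mulVec] using (Submodule.eq_top_iff'.mp htop f : _)
end Matrix

lemma MeasureTheory.ae_forall_of_forall_ae_of_isClosed {α E : Type*} [MeasurableSpace α]
    {μ : Measure α} [TopologicalSpace E] [TopologicalSpace.SeparableSpace E]
    {p : α → E → Prop} (hp : ∀ t, IsClosed {x | p t x}) (h : ∀ x, ∀ᵐ t ∂μ, p t x) :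
    ∀ᵐ t ∂μ, ∀ x, p t x := by
  obtain ⟨s, hs_count, hs_dense⟩ := TopologicalSpace.exists_countable_dense E
  filter_upwards [(ae_ball_iff hs_count).mpr fun x _ => h x] with t ht x
  have : s ⊆ {x | p t x} := ht
  exact (hp t).closure_subset_iff.mpr this (hs_dense.closure_eq ▸ Set.mem_univ x)

namespace MeasureTheory.ComplexMeasure
variable {α : Type*} [MeasurableSpace α] (c : ComplexMeasure α) (μ : Measure α)

lemma measurable_rnDeriv : Measurable (c.rnDeriv μ) :=
  Complex.measurableEquivRealProd.symm.measurable.comp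
    ((SignedMeasure.measurable_rnDeriv _ _).prodMk (SignedMeasure.measurable_rnDeriv _ _))

lemma withDensityᵥ_rnDeriv_eq [SigmaFinite μ] (hc : c ≪ᵥ μ.toENNRealVectorMeasure) :
    μ.withDensityᵥ (c.rnDeriv μ) = c := by
  have : c.HaveLebesgueDecomposition μ := ⟨inferInstance, inferInstance⟩
  have hsingular (s : SignedMeasure α) (hs : s ≪ᵥ μ.toENNRealVectorMeasure) :
      s.singularPart μ = 0 := by
    have := s.singularPart_add_withDensity_rnDeriv_eq μ
    rwa [SignedMeasure.withDensityᵥ_rnDeriv_eq s μ hs, add_eq_right] at this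
  obtain ⟨hre, him⟩ := (absolutelyContinuous_ennreal_iff c _).mp hc
  have h := c.singularPart_add_withDensity_rnDeriv_eq (μ := μ)
  rwa [singularPart, hsingular _ hre, hsingular _ him,
    show SignedMeasure.toComplexMeasure (0 : SignedMeasure α) 0 = 0 from rfl, zero_add] at h

lemma setIntegral_rnDeriv [SigmaFinite μ] (hc : c ≪ᵥ μ.toENNRealVectorMeasure)
    {s : Set α} (hs : MeasurableSet s) : ∫ t in s, c.rnDeriv μ t ∂μ = c s := by
  rw [← withDensityᵥ_apply (integrable_rnDeriv c μ) hs, withDensityᵥ_rnDeriv_eq c μ hc]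

end MeasureTheory.ComplexMeasure

namespace MeasureTheory.VectorMeasure
variable {α ι : Type*} [MeasurableSpace α] (S : VectorMeasure α (Matrix ι ι ℂ))

noncomputable def entry (i j : ι) : ComplexMeasure α :=
  S.mapRange (entryAddMonoidHom ℂ i j) ((continuous_apply j).comp (continuous_apply i))

@[simp] lemma entry_apply (i j : ι) (δ : Set α) : S.entry i j δ = S δ i j := rfl

variable [Fintype ι]

noncomputable def reTrace : SignedMeasure α :=
  S.mapRange (Complex.reAddGroupHom.comp (traceAddMonoidHom ι ℂ))
    (Complex.continuous_re.comp continuous_id.matrix_trace)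

@[simp] lemma reTrace_apply (δ : Set α) : S.reTrace δ = (S δ).trace.re := rfl

variable (hS : ∀ δ, MeasurableSet δ → (S δ).PosSemidef)

noncomputable def traceMeasure : Measure α :=
  S.reTrace.toMeasureOfZeroLE Set.univ .univ <|
    (restrict_le_restrict_iff _ _ .univ).mpr fun _ hδ _ => (hS _ hδ).re_trace_nonneg

instance : IsFiniteMeasure (S.traceMeasure hS) := by
  unfold traceMeasure; infer_instance

lemma traceMeasure_real_apply {δ : Set α} (hδ : MeasurableSet δ) :
    (S.traceMeasure hS).real δ = (S δ).trace.re := by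
  rw [Measure.real, traceMeasure, SignedMeasure.toMeasureOfZeroLE_apply _ _ _ hδ]
  simp

lemma traceMeasure_apply_eq_zero_iff {δ : Set α} (hδ : MeasurableSet δ) :
    S.traceMeasure hS δ = 0 ↔ S δ = 0 := by
  rw [← (hS δ hδ).trace_eq_zero_iff, ← measureReal_eq_zero_iff, traceMeasure_real_apply S hS hδ,
    Complex.ext_iff, (Complex.le_def.mp (hS δ hδ).trace_nonneg).2.symm]
  simp

lemma entry_absolutelyContinuous (i j : ι) :
    S.entry i j ≪ᵥ (S.traceMeasure hS).toENNRealVectorMeasure := by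
  refine AbsolutelyContinuous.mk fun δ hδ hδ₀ => ?_
  rw [Measure.toENNRealVectorMeasure_apply_measurable hδ,
    traceMeasure_apply_eq_zero_iff S hS hδ] at hδ₀
  simp [hδ₀]

noncomputable def traceDensity (t : α) : Matrix ι ι ℂ :=
  of fun i j => (S.entry i j).rnDeriv (S.traceMeasure hS) t

lemma integrable_traceDensity_apply (i j : ι) :
    Integrable (fun t => S.traceDensity hS t i j) (S.traceMeasure hS) :=
  ComplexMeasure.integrable_rnDeriv _ _

lemma setIntegral_traceDensity_apply (i j : ι) {δ : Set α} (hδ : MeasurableSet δ) :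
    ∫ t in δ, S.traceDensity hS t i j ∂S.traceMeasure hS = S δ i j :=
  ComplexMeasure.setIntegral_rnDeriv _ _ (S.entry_absolutelyContinuous hS i j) hδ

lemma integrable_dotProduct_traceDensity_mulVec (f g : ι → ℂ) :
    Integrable (fun t => f ⬝ᵥ S.traceDensity hS t *ᵥ g) (S.traceMeasure hS) :=
  integrable_finsetSum _ fun i _ => (integrable_finsetSum _ fun j _ =>
    (S.integrable_traceDensity_apply hS i j).mul_const _).const_mul _

lemma setIntegral_dotProduct_traceDensity_mulVec (f g : ι → ℂ) {δ : Set α}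
    (hδ : MeasurableSet δ) :
    ∫ t in δ, f ⬝ᵥ S.traceDensity hS t *ᵥ g ∂S.traceMeasure hS = f ⬝ᵥ S δ *ᵥ g := by
  simp only [dotProduct, mulVec]
  rw [MeasureTheory.integral_finsetSum _ fun i _ => ?_]
  · refine Finset.sum_congr rfl fun i _ => ?_
    rw [integral_const_mul, MeasureTheory.integral_finsetSum _ fun j _ => ?_]
    · congr 1
      exact Finset.sum_congr rfl fun j _ => by
        rw [integral_mul_const, setIntegral_traceDensity_apply S hS i j hδ]
    · exact ((S.integrable_traceDensity_apply hS i j).mul_const _).integrableOn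
  · exact ((integrable_finsetSum _ fun j _ =>
      (S.integrable_traceDensity_apply hS i j).mul_const _).const_mul _).integrableOn

lemma setIntegral_re_dotProduct_traceDensity_mulVec (f g : ι → ℂ) {δ : Set α}
    (hδ : MeasurableSet δ) :
    ∫ t in δ, (f ⬝ᵥ S.traceDensity hS t *ᵥ g).re ∂S.traceMeasure hS = (f ⬝ᵥ S δ *ᵥ g).re := by
  rw [← S.setIntegral_dotProduct_traceDensity_mulVec hS f g hδ]
  exact integral_re (S.integrable_dotProduct_traceDensity_mulVec hS f g).integrableOn

lemma ae_re_dotProduct_traceDensity_mulVec_nonneg (f : ι → ℂ) :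
    ∀ᵐ t ∂S.traceMeasure hS, 0 ≤ (star f ⬝ᵥ S.traceDensity hS t *ᵥ f).re := by
  refine ae_nonneg_of_forall_setIntegral_nonneg
    (S.integrable_dotProduct_traceDensity_mulVec hS _ f).re fun δ hδ _ => ?_
  rw [S.setIntegral_re_dotProduct_traceDensity_mulVec hS _ f hδ]
  exact (hS δ hδ).re_dotProduct_nonneg f

lemma ae_forall_re_dotProduct_traceDensity_mulVec_nonneg :
    ∀ᵐ t ∂S.traceMeasure hS, ∀ f, 0 ≤ (star f ⬝ᵥ S.traceDensity hS t *ᵥ f).re :=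
  ae_forall_of_forall_ae_of_isClosed (fun _ => isClosed_le continuous_const (by fun_prop))
    (S.ae_re_dotProduct_traceDensity_mulVec_nonneg hS)

lemma ae_re_trace_traceDensity_eq_one :
    ∀ᵐ t ∂S.traceMeasure hS, (S.traceDensity hS t).trace.re = 1 := by
  have hint : Integrable (fun t => (S.traceDensity hS t).trace) (S.traceMeasure hS) :=
    integrable_finsetSum _ fun i _ => S.integrable_traceDensity_apply hS i i
  refine hint.re.ae_eq_of_forall_setIntegral_eq _ _ (integrable_const 1) fun δ hδ _ => ?_
  rw [MeasureTheory.setIntegral_const, smul_eq_mul, mul_one, S.traceMeasure_real_apply hS hδ,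
    integral_re hint.integrableOn]
  simp only [trace, diag_apply]
  rw [MeasureTheory.integral_finsetSum _ fun i _ =>
      (S.integrable_traceDensity_apply hS i i).integrableOn]
  simp only [S.setIntegral_traceDensity_apply hS _ _ hδ]
  rfl

lemma ae_addHaar_setOf_re_dotProduct_traceDensity_mulVec_eq_zero (ν : Measure (ι → ℂ))
    [ν.IsAddHaarMeasure] :
    ∀ᵐ t ∂S.traceMeasure hS, ν {f | (star f ⬝ᵥ S.traceDensity hS t *ᵥ f).re = 0} = 0 := by
  filter_upwards [S.ae_forall_re_dotProduct_traceDensity_mulVec_nonneg hS,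
    S.ae_re_trace_traceDensity_eq_one hS] with t hnonneg htrace
  refine (S.traceDensity hS t).addHaar_setOf_re_dotProduct_mulVec_eq_zero hnonneg (fun h => ?_) ν
  have := congrArg (fun A => A.trace.re) h
  simp [trace_add, trace_conjTranspose, htrace] at this

lemma measurable_star_dotProduct_traceDensity_mulVec :
    Measurable fun p : α × (ι → ℂ) => star p.2 ⬝ᵥ S.traceDensity hS p.1 *ᵥ p.2 := by
  have (i j : ι) : Measurable fun t => S.traceDensity hS t i j :=
    ComplexMeasure.measurable_rnDeriv _ _
  simp only [dotProduct, mulVec]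
  fun_prop

lemma ae_ae_re_dotProduct_traceDensity_mulVec_ne_zero (ν : Measure (ι → ℂ))
    [ν.IsAddHaarMeasure] :
    ∀ᵐ f ∂ν, ∀ᵐ t ∂S.traceMeasure hS, (star f ⬝ᵥ S.traceDensity hS t *ᵥ f).re ≠ 0 := by
  refine (Measure.ae_ae_comm ?_).mp ?_
  · exact (S.measurable_star_dotProduct_traceDensity_mulVec hS).re (measurableSet_singleton 0).compl
  filter_upwards [S.ae_addHaar_setOf_re_dotProduct_traceDensity_mulVec_eq_zero hS ν] with t ht
  simpa [ae_iff] using ht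

lemma apply_eq_zero_of_ae_re_dotProduct_traceDensity_mulVec_ne_zero {f : ι → ℂ}
    (hf : ∀ᵐ t ∂S.traceMeasure hS, (star f ⬝ᵥ S.traceDensity hS t *ᵥ f).re ≠ 0)
    {δ : Set α} (hδ : MeasurableSet δ) (h : star f ⬝ᵥ S δ *ᵥ f = 0) : S δ = 0 := by
  have hzero : (fun t => (star f ⬝ᵥ S.traceDensity hS t *ᵥ f).re)
      =ᵐ[(S.traceMeasure hS).restrict δ] 0 := by
    refine (setIntegral_eq_zero_iff_of_nonneg_ae
      (ae_restrict_of_ae (S.ae_re_dotProduct_traceDensity_mulVec_nonneg hS f))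
      (S.integrable_dotProduct_traceDensity_mulVec hS _ f).re.integrableOn).mp ?_
    rw [S.setIntegral_re_dotProduct_traceDensity_mulVec hS _ f hδ, h, Complex.zero_re]
  have hfalse : ∀ᵐ _ ∂(S.traceMeasure hS).restrict δ, False := by
    filter_upwards [hzero, ae_restrict_of_ae hf] with t h₀ hne using hne h₀
  rw [← S.traceMeasure_apply_eq_zero_iff hS hδ, ← Measure.restrict_eq_zero]
  exact ae_eq_bot.mp (Filter.eventually_false_iff_eq_bot.mp hfalse)

end MeasureTheory.VectorMeasure

/-- **Theorem 3(b), finite-dimensional case.** For a nonnegative matrix measure `S`,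
the complement of the set `Ω_S` of vectors of maximal type has Lebesgue (Haar)
measure zero in `ℂⁿ ≅ ℝ^{2n}`. -/
theorem stmt_3 (n : ℕ)
    (S : VectorMeasure ℝ (Matrix (Fin n) (Fin n) ℂ))
    (hpos : ∀ δ : Set ℝ, MeasurableSet δ → (S δ).PosSemidef) :
    volume (maximalTypeSet n S)ᶜ = 0 := by
  have hae := ae_iff.mp (S.ae_ae_re_dotProduct_traceDensity_mulVec_ne_zero hpos volume)
  refine measure_mono_null ?_ hae
  intro f hf hf_ae
  exact hf fun δ hδ => S.apply_eq_zero_of_ae_re_dotProduct_traceDensity_mulVec_ne_zero hpos hf_ae hδ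
end

section
/- For every n×n nonnegative matrix measure Σ on ℝ there exists a vector f ∈ ℂⁿ of maximal type, i.e. a vector f such that for every Borel set δ, ⟪Σ(δ)f, f⟫ = 0 implies Σ(δ) = 0. -/
open MeasureTheory Matrix
open scoped ComplexOrder ENNReal

namespace Stmt4Aux

variable {n : ℕ}

/-- The additive monoid hom `A ↦ (f* A f).re`. -/
noncomputable def phi (f : Fin n → ℂ) : Matrix (Fin n) (Fin n) ℂ →+ ℝ where
  toFun A := (star f ⬝ᵥ A *ᵥ f).re
  map_zero' := by simp
  map_add' A B := by simp [Matrix.add_mulVec, dotProduct_add]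

lemma phi_continuous (f : Fin n → ℂ) : Continuous (phi (n := n) f) := by
  have h : Continuous fun A : Matrix (Fin n) (Fin n) ℂ => star f ⬝ᵥ A *ᵥ f :=
    continuous_const.dotProduct (continuous_id.matrix_mulVec continuous_const)
  exact Complex.continuous_re.comp h

variable (S : VectorMeasure ℝ (Matrix (Fin n) (Fin n) ℂ))

/-- The scalar measure `μ_f : δ ↦ f* S(δ) f`. -/
noncomputable def mu (hpos : ∀ δ : Set ℝ, MeasurableSet δ → (S δ).PosSemidef)
    (f : Fin n → ℂ) : Measure ℝ :=
  Measure.ofMeasurable (fun δ _ => ENNReal.ofReal (phi f (S δ)))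
    (by simp [phi])
    (by
      intro g hm hd
      have hs : HasSum (fun i => phi f (S (g i))) (phi f (S (⋃ i, g i))) :=
        (S.m_iUnion hm hd).map (phi f) (phi_continuous f)
      rw [← hs.tsum_eq, ENNReal.ofReal_tsum_of_nonneg (fun i => ?_) hs.summable]
      exact (Complex.nonneg_iff.mp ((hpos _ (hm i)).dotProduct_mulVec_nonneg f)).1)

lemma mu_apply (hpos : ∀ δ : Set ℝ, MeasurableSet δ → (S δ).PosSemidef) (f : Fin n → ℂ) {δ : Set ℝ} (hδ : MeasurableSet δ) :
    mu S hpos f δ = ENNReal.ofReal ((star f ⬝ᵥ S δ *ᵥ f).re) :=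
  Measure.ofMeasurable_apply δ hδ

lemma mu_eq_zero_iff (hpos : ∀ δ : Set ℝ, MeasurableSet δ → (S δ).PosSemidef) (f : Fin n → ℂ) {δ : Set ℝ} (hδ : MeasurableSet δ) :
    mu S hpos f δ = 0 ↔ star f ⬝ᵥ S δ *ᵥ f = 0 := by
  rw [mu_apply S hpos f hδ, ENNReal.ofReal_eq_zero]
  constructor
  · intro h
    have h2 := Complex.nonneg_iff.mp ((hpos δ hδ).dotProduct_mulVec_nonneg f)
    exact Complex.ext (le_antisymm h h2.1) h2.2.symm
  · intro h; rw [h]; simp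

instance mu_finite (hpos : ∀ δ : Set ℝ, MeasurableSet δ → (S δ).PosSemidef) (f : Fin n → ℂ) : IsFiniteMeasure (mu S hpos f) :=
  ⟨by rw [mu_apply S hpos f MeasurableSet.univ]; exact ENNReal.ofReal_lt_top⟩

end Stmt4Aux

open Stmt4Aux

/-- **Existence of a vector of maximal type (Section 4).**
Every `n × n` nonnegative matrix measure `S` on `ℝ` possesses a vector `f ∈ ℂⁿ` of
maximal type, i.e. one for which the scalar measure `μ_f : δ ↦ ⟪S(δ)f, f⟫ = f* S(δ) f`
is equivalent to `S`: for every Borel `δ`, `⟪S(δ)f, f⟫ = 0` implies `S(δ) = 0`. -/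
theorem stmt_4 (n : ℕ)
    (S : VectorMeasure ℝ (Matrix (Fin n) (Fin n) ℂ))
    (hpos : ∀ δ : Set ℝ, MeasurableSet δ → (S δ).PosSemidef) :
    ∃ f : Fin n → ℂ,
      ∀ δ : Set ℝ, MeasurableSet δ → star f ⬝ᵥ (S δ) *ᵥ f = 0 → S δ = 0 := by
  classical
  set e : Fin n → (Fin n → ℂ) := fun i => Pi.single i 1 with he
  set τ : Measure ℝ := Measure.sum (fun i : Fin n => mu S hpos (e i)) with hτ
  haveI hτfin : IsFiniteMeasure τ := ⟨by
    rw [hτ, Measure.sum_apply _ MeasurableSet.univ, tsum_fintype]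
    exact ENNReal.sum_lt_top.mpr fun i _ => measure_lt_top _ _⟩
  -- τ-null sets are S-null.
  have hS0 : ∀ δ : Set ℝ, MeasurableSet δ → τ δ = 0 → S δ = 0 := by
    intro δ hδ h0
    rw [hτ, Measure.sum_apply _ hδ, ENNReal.tsum_eq_zero] at h0
    have hv : ∀ i, S δ *ᵥ e i = 0 := fun i =>
      ((hpos δ hδ).dotProduct_mulVec_zero_iff _).mp
        ((mu_eq_zero_iff S hpos (e i) hδ).mp (h0 i))
    ext i j
    have h1 := congrFun (hv j) i
    simpa [he] using h1
  have habs : ∀ f : Fin n → ℂ, mu S hpos f ≪ τ := by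
    intro f
    refine Measure.AbsolutelyContinuous.mk fun δ hδ h0 => ?_
    rw [mu_apply S hpos f hδ, hS0 δ hδ h0]
    simp
  set ρ : (Fin n → ℂ) → ℝ → ℝ≥0∞ := fun f => (mu S hpos f).rnDeriv τ with hρ
  have hint : ∀ (f : Fin n → ℂ) (δ : Set ℝ), MeasurableSet δ →
      ∫⁻ x in δ, ρ f x ∂τ = mu S hpos f δ := fun f δ hδ =>
    Measure.setLIntegral_rnDeriv' (habs f) hδ
  have hzint : ∀ (f : Fin n → ℂ) (δ : Set ℝ), MeasurableSet δ → mu S hpos f δ = 0 →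
      ∀ᵐ t ∂τ.restrict δ, ρ f t = 0 := by
    intro f δ hδ h0
    have h1 := hint f δ hδ
    rw [h0] at h1
    exact (ae_restrict_iff' hδ).mpr ((setLIntegral_eq_zero_iff hδ (Measure.measurable_rnDeriv _ _)).mp h1)
  have hmuz : ∀ (f : Fin n → ℂ) (δ : Set ℝ), MeasurableSet δ →
      (∀ᵐ t ∂τ.restrict δ, ρ f t = 0) → mu S hpos f δ = 0 := by
    intro f δ hδ hae
    rw [← hint f δ hδ]
    calc ∫⁻ x in δ, ρ f x ∂τ = ∫⁻ _ in δ, 0 ∂τ := lintegral_congr_ae hae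
    _ = 0 := lintegral_zero
  have hρmeas : ∀ f : Fin n → ℂ, MeasurableSet {t : ℝ | ρ f t = 0} := fun f =>
    (Measure.measurable_rnDeriv _ _) (measurableSet_singleton 0)
  -- Key combination step.
  have key : ∀ L : List (Fin n → ℂ), ∃ f : Fin n → ℂ,
      ∀ δ : Set ℝ, MeasurableSet δ → mu S hpos f δ = 0 →
        ∀ g ∈ L, mu S hpos g δ = 0 := by
    intro L
    induction L with
    | nil => exact ⟨0, by simp⟩
    | cons g L ih =>
      obtain ⟨f, hf⟩ := ih
      set A : ℝ → Set ℝ := fun c =>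
        {t | ρ (f + (c : ℂ) • g) t = 0} ∩ ({t | ρ f t = 0} ∩ {t | ρ g t = 0})ᶜ with hA
      have hAmeas : ∀ c, MeasurableSet (A c) := fun c =>
        (hρmeas _).inter ((hρmeas f).inter (hρmeas g)).compl
      -- pairwise a.e. disjoint
      have hdisj : Pairwise (Function.onFun (MeasureTheory.AEDisjoint τ) A) := by
        intro c c' hne
        set δ : Set ℝ := A c ∩ A c' with hδdef
        have hδ : MeasurableSet δ := (hAmeas c).inter (hAmeas c')
        have hmc : mu S hpos (f + (c : ℂ) • g) δ = 0 := by
          refine hmuz _ _ hδ ?_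
          filter_upwards [ae_restrict_mem hδ] with t ht
          exact ht.1.1
        have hmc' : mu S hpos (f + (c' : ℂ) • g) δ = 0 := by
          refine hmuz _ _ hδ ?_
          filter_upwards [ae_restrict_mem hδ] with t ht
          exact ht.2.1
        have hvc : S δ *ᵥ f + (c : ℂ) • (S δ *ᵥ g) = 0 := by
          have := ((hpos δ hδ).dotProduct_mulVec_zero_iff _).mp
            ((mu_eq_zero_iff S hpos _ hδ).mp hmc)
          rwa [Matrix.mulVec_add, Matrix.mulVec_smul] at this
        have hvc' : S δ *ᵥ f + (c' : ℂ) • (S δ *ᵥ g) = 0 := by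
          have := ((hpos δ hδ).dotProduct_mulVec_zero_iff _).mp
            ((mu_eq_zero_iff S hpos _ hδ).mp hmc')
          rwa [Matrix.mulVec_add, Matrix.mulVec_smul] at this
        have hg0 : S δ *ᵥ g = 0 := by
          have h2 : ((c : ℂ) - (c' : ℂ)) • (S δ *ᵥ g) = 0 := by
            have h3 : (S δ *ᵥ f + (c : ℂ) • (S δ *ᵥ g)) -
                (S δ *ᵥ f + (c' : ℂ) • (S δ *ᵥ g)) =
                (c : ℂ) • (S δ *ᵥ g) - (c' : ℂ) • (S δ *ᵥ g) := by abel
            rw [sub_smul, ← h3, hvc, hvc', sub_zero]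
          rcases smul_eq_zero.mp h2 with h | h
          · exact absurd (sub_eq_zero.mp h) (by exact_mod_cast hne)
          · exact h
        have hf0 : S δ *ᵥ f = 0 := by
          have := hvc
          rwa [hg0, smul_zero, add_zero] at this
        have hmf : mu S hpos f δ = 0 :=
          (mu_eq_zero_iff S hpos f hδ).mpr (by rw [hf0, dotProduct_zero])
        have hmg : mu S hpos g δ = 0 :=
          (mu_eq_zero_iff S hpos g hδ).mpr (by rw [hg0, dotProduct_zero])
        have aef := hzint f δ hδ hmf
        have aeg := hzint g δ hδ hmg
        have hfalse : ∀ᵐ t ∂τ.restrict δ, False := by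
          filter_upwards [aef, aeg, ae_restrict_mem hδ] with t h1 h2 ht
          exact ht.1.2 ⟨h1, h2⟩
        have h4 := ae_iff.mp hfalse
        exact (by simpa [Measure.restrict_apply_univ] using h4 : τ δ = 0)
      -- choose a good c
      have hcnt := Measure.countable_meas_pos_of_disjoint_iUnion₀ (μ := τ)
        (fun c => (hAmeas c).nullMeasurableSet) hdisj
      have hex : ∃ c : ℝ, τ (A c) = 0 := by
        by_contra hc
        push_neg at hc
        have huniv : {c : ℝ | 0 < τ (A c)} = Set.univ :=
          Set.eq_univ_of_forall fun c => pos_iff_ne_zero.mpr (hc c)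
        rw [huniv] at hcnt
        exact Set.not_countable_univ hcnt
      obtain ⟨c, hc0⟩ := hex
      refine ⟨f + (c : ℂ) • g, fun δ hδ h0 => ?_⟩
      have aeh := hzint _ δ hδ h0
      have aenA : ∀ᵐ t ∂τ, t ∉ A c := by
        rw [ae_iff]
        simpa [Set.setOf_mem_eq] using hc0
      have aenA' : ∀ᵐ t ∂τ.restrict δ, t ∉ A c :=
        aenA.filter_mono (ae_mono Measure.restrict_le_self)
      have aefg : ∀ᵐ t ∂τ.restrict δ, ρ f t = 0 ∧ ρ g t = 0 := by
        filter_upwards [aeh, aenA'] with t h1 h2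
        by_contra hcon
        exact h2 ⟨h1, hcon⟩
      have hmf : mu S hpos f δ = 0 := hmuz f δ hδ (aefg.mono fun t ht => ht.1)
      have hmg : mu S hpos g δ = 0 := hmuz g δ hδ (aefg.mono fun t ht => ht.2)
      intro g' hg'
      rcases List.mem_cons.mp hg' with rfl | hmem
      · exact hmg
      · exact hf δ hδ hmf g' hmem
  obtain ⟨f, hf⟩ := key (List.ofFn e)
  refine ⟨f, fun δ hδ h0 => ?_⟩
  have hmf : mu S hpos f δ = 0 := (mu_eq_zero_iff S hpos f hδ).mpr h0
  have hall : ∀ i, mu S hpos (e i) δ = 0 := fun i =>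
    hf δ hδ hmf (e i) (by rw [List.mem_ofFn]; exact ⟨i, rfl⟩)
  have hv : ∀ i, S δ *ᵥ e i = 0 := fun i =>
    ((hpos δ hδ).dotProduct_mulVec_zero_iff _).mp
      ((mu_eq_zero_iff S hpos (e i) hδ).mp (hall i))
  ext i j
  have h1 := congrFun (hv j) i
  simpa [he] using h1
end

section
/- Let A be a Hermitian n×n complex matrix and let L be a cyclic subspace for A, i.e. a subspace of ℂⁿ with span{ A^k x : k ∈ ℕ, x ∈ L } = ℂⁿ. Let Ω := { g ∈ L : for every eigenvalue λ of A, the orthogonal projection of g onto ker(A − λI) is nonzero } be the set of vectors of maximal type for the resolution of identity of A lying in L. Then Ω is a dense Gδ subset of L (with its subspace topology) and L \ Ω is meagre (of first category) in L. -/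
/-!
Since there are finitely many eigenvalues, `Ω` is a finite intersection of the sets
`{g ∈ L | P_λ g ≠ 0}`, each the complement of the kernel of the linear map `P_λ|_L`.
That map is nonzero: otherwise `L ⊆ (ker (A - λ))ᗮ`, a subspace which is `A`-invariant
because `A` is self-adjoint, so cyclicity of `L` forces `(ker (A - λ))ᗮ = ℂⁿ`,
i.e. `λ` is no eigenvalue.
The complement of a proper subspace is open and dense, hence so is `Ω`, and an open dense set
is a `Gδ` with meagre complement.
-/

open MeasureTheory Module

/-- The self-adjoint endomorphism of `ℂⁿ` (with the Euclidean inner product)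
associated with a matrix `A`. -/
noncomputable def matEnd (n : ℕ) (A : Matrix (Fin n) (Fin n) ℂ) :
    Module.End ℂ (EuclideanSpace ℂ (Fin n)) :=
  Matrix.toEuclideanLin A

open Module.End

theorem Submodule.dense_compl_of_ne_top {𝕜 V : Type*} [NontriviallyNormedField 𝕜]
    [NormedAddCommGroup V] [NormedSpace 𝕜 V] {p : Submodule 𝕜 V} (hp : p ≠ ⊤) :
    Dense ((p : Set V)ᶜ) := by
  rw [← interior_eq_empty_iff_dense_compl, ← Set.not_nonempty_iff_eq_empty]
  exact fun h ↦ hp (p.eq_top_of_nonempty_interior' h)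

theorem ContinuousLinearMap.dense_setOf_ne_zero {𝕜 V W : Type*} [NontriviallyNormedField 𝕜]
    [NormedAddCommGroup V] [NormedSpace 𝕜 V] [NormedAddCommGroup W] [NormedSpace 𝕜 W]
    {f : V →L[𝕜] W} (hf : f ≠ 0) : Dense {x | f x ≠ 0} :=
  Submodule.dense_compl_of_ne_top (p := (f : V →ₗ[𝕜] W).ker) fun h ↦
    hf (ContinuousLinearMap.coe_injective (LinearMap.ker_eq_top.mp h))

theorem Submodule.eq_top_of_iSup_map_pow_eq_top {R M : Type*} [Semiring R] [AddCommMonoid M]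
    [Module R M] {f : Module.End R M} {L p : Submodule R M}
    (hL : ⨆ k : ℕ, L.map (f ^ k) = ⊤) (hLp : L ≤ p) (hp : ∀ x ∈ p, f x ∈ p) :
    p = ⊤ := by
  have hpow : ∀ k : ℕ, ∀ x ∈ p, (f ^ k) x ∈ p := by
    intro k
    induction k with
    | zero => exact fun x hx ↦ hx
    | succ k ih =>
      exact fun x hx ↦ by rw [pow_succ', Module.End.mul_apply]; exact hp _ (ih x hx)
  rw [eq_top_iff, ← hL]
  exact iSup_le fun k ↦ Submodule.map_le_iff_le_comap.mpr fun x hx ↦ hpow k x (hLp hx)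

section MaximalType

variable {𝕜 E : Type*} [RCLike 𝕜] [NormedAddCommGroup E] [InnerProductSpace 𝕜 E]
  [FiniteDimensional 𝕜 E] {T : Module.End 𝕜 E} {L : Submodule 𝕜 E}

variable (T L) in
def maximalTypeVectors : Set L :=
  {g | ∀ μ, HasEigenvalue T μ → (eigenspace T μ).orthogonalProjectionOnto g ≠ 0}

variable (T L) in
theorem maximalTypeVectors_eq_biInter :
    maximalTypeVectors T L = ⋂ μ ∈ {μ | HasEigenvalue T μ},
      {g | (eigenspace T μ).orthogonalProjectionOnto.comp L.subtypeL g ≠ 0} := by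
  ext g
  simp [maximalTypeVectors]

theorem isOpen_maximalTypeVectors : IsOpen (maximalTypeVectors T L) := by
  rw [maximalTypeVectors_eq_biInter]
  exact (finite_hasEigenvalue T).isOpen_biInter fun μ _ ↦
    isOpen_compl_singleton.preimage (ContinuousLinearMap.continuous _)

theorem LinearMap.IsSymmetric.orthogonalProjectionOnto_eigenspace_comp_subtypeL_ne_zero
    (hT : T.IsSymmetric) (hL : ⨆ k : ℕ, L.map (T ^ k) = ⊤) {μ : 𝕜}
    (hμ : HasEigenvalue T μ) :
    (eigenspace T μ).orthogonalProjectionOnto.comp L.subtypeL ≠ 0 := by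
  intro h
  have hLperp : L ≤ (eigenspace T μ)ᗮ := fun x hx ↦
    Submodule.orthogonalProjectionOnto_eq_zero_iff.mp (DFunLike.congr_fun h ⟨x, hx⟩)
  have hperp := Submodule.eq_top_of_iSup_map_pow_eq_top hL hLperp
    (hT.invariant_orthogonalComplement_eigenspace μ)
  exact hμ ((Submodule.orthogonal_eq_top_iff _).mp hperp)

theorem LinearMap.IsSymmetric.dense_maximalTypeVectors (hT : T.IsSymmetric)
    (hL : ⨆ k : ℕ, L.map (T ^ k) = ⊤) : Dense (maximalTypeVectors T L) := by
  rw [maximalTypeVectors_eq_biInter]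
  exact dense_biInter_of_isOpen
    (fun μ _ ↦ isOpen_compl_singleton.preimage (ContinuousLinearMap.continuous _))
    (finite_hasEigenvalue T).countable fun μ hμ ↦ ContinuousLinearMap.dense_setOf_ne_zero
      (hT.orthogonalProjectionOnto_eigenspace_comp_subtypeL_ne_zero hL hμ)

end MaximalType

/-- **Corollary 2 to Theorem 3, finite-dimensional case.**
Let `A` be a Hermitian `n × n` matrix and `L` a cyclic subspace for `A`
(`span {A^k x : k ∈ ℕ, x ∈ L} = ℂⁿ`).  Then the set
`Ω = {g ∈ L : Pₗ g ≠ 0 for every eigenvalue λ of A}` of vectors of maximal type for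
the resolution of identity of `A` lying in `L` (here `Pₗ` is the orthogonal
projection onto `ker (A - λ)`) is a dense `Gδ` subset of `L`, and `L \ Ω` is meagre
in `L`. -/
theorem stmt_5 (n : ℕ) (A : Matrix (Fin n) (Fin n) ℂ) (hA : A.IsHermitian)
    (L : Submodule ℂ (EuclideanSpace ℂ (Fin n)))
    (hL : (⨆ k : ℕ, Submodule.map (matEnd n A ^ k) L) = ⊤) :
    IsGδ {g : L | ∀ μ : ℂ, (matEnd n A).HasEigenvalue μ →
        Submodule.orthogonalProjection ((matEnd n A).eigenspace μ) (g : EuclideanSpace ℂ (Fin n)) ≠ 0} ∧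
    Dense {g : L | ∀ μ : ℂ, (matEnd n A).HasEigenvalue μ →
        Submodule.orthogonalProjection ((matEnd n A).eigenspace μ) (g : EuclideanSpace ℂ (Fin n)) ≠ 0} ∧
    IsMeagre {g : L | ∀ μ : ℂ, (matEnd n A).HasEigenvalue μ →
        Submodule.orthogonalProjection ((matEnd n A).eigenspace μ) (g : EuclideanSpace ℂ (Fin n)) ≠ 0}ᶜ := by
  have hopen : IsOpen (maximalTypeVectors (matEnd n A) L) := isOpen_maximalTypeVectors
  have hdense : Dense (maximalTypeVectors (matEnd n A) L) :=
    (Matrix.isSymmetric_toEuclideanLin_iff.mpr hA).dense_maximalTypeVectors hL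
  refine ⟨hopen.isGδ, hdense, ?_⟩
  rw [IsMeagre, compl_compl]
  exact residual_of_dense_open hopen hdense
end

section
/- Let A be a Hermitian n×n complex matrix and let L be a cyclic subspace for A, i.e. a subspace of ℂⁿ with span{ A^k x : k ∈ ℕ, x ∈ L } = ℂⁿ. Then there exists a vector g ∈ L such that for every eigenvalue λ of A the orthogonal projection of g onto the eigenspace ker(A − λI) is nonzero; i.e. L contains a vector of maximal type for the resolution of identity of A. -/
/-!
The orthogonal complement of an eigenspace of a self-adjoint operator is invariant, so it
cannot contain a cyclic subspace `L` without being everything, which a nonzero eigenspace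
forbids. Hence the vectors of `L` whose projection onto some eigenspace vanishes lie in
finitely many proper subspaces of `L`, and these cannot cover `L` since `ℂ` is infinite.
-/

open MeasureTheory Module

theorem Submodule.iSup_map_pow_le {R M : Type*} [Semiring R] [AddCommMonoid M] [Module R M]
    {f : Module.End R M} {L p : Submodule R M} (hp : p ≤ p.comap f) (hL : L ≤ p) :
    ⨆ k : ℕ, L.map (f ^ k) ≤ p :=
  iSup_le fun k => Submodule.map_le_iff_le_comap.mpr (hL.trans (p.le_comap_pow_of_le_comap hp k))

theorem Submodule.exists_mem_forall_notMem_of_not_le {K V ι : Type*} [Field K] [Infinite K]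
    [AddCommGroup V] [Module K V] [Finite ι] {L : Submodule K V} {p : ι → Submodule K V}
    (h : ∀ i, ¬ L ≤ p i) : ∃ g ∈ L, ∀ i, g ∉ p i := by
  have hcover : ⋃ i, ((p i).comap L.subtype : Set L) ≠ Set.univ := fun hc => by
    obtain ⟨i, hi⟩ := Subspace.exists_eq_top_of_iUnion_eq_univ hc
    exact h i (Submodule.comap_subtype_eq_top.mp hi)
  obtain ⟨g, hg⟩ := (Set.ne_univ_iff_exists_notMem _).mp hcover
  exact ⟨g, g.2, fun i hi => hg (Set.mem_iUnion.mpr ⟨i, hi⟩)⟩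

theorem LinearMap.IsSymmetric.not_le_orthogonal_eigenspace {𝕜 E : Type*} [RCLike 𝕜]
    [NormedAddCommGroup E] [InnerProductSpace 𝕜 E] {T : Module.End 𝕜 E} (hT : T.IsSymmetric)
    {L : Submodule 𝕜 E} (hL : ⨆ k : ℕ, L.map (T ^ k) = ⊤) {μ : 𝕜} (hμ : T.HasEigenvalue μ) :
    ¬ L ≤ (T.eigenspace μ)ᗮ := fun hle => by
  have htop : (T.eigenspace μ)ᗮ = ⊤ :=
    top_le_iff.mp (hL ▸ Submodule.iSup_map_pow_le
      (hT.invariant_orthogonalComplement_eigenspace μ) hle)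
  exact Module.End.hasEigenvalue_iff.mp hμ ((Submodule.orthogonal_eq_top_iff _).mp htop)

/-- **Existence of a vector of maximal type in a cyclic subspace.**
Let `A` be a Hermitian `n × n` matrix and `L` a cyclic subspace for `A`
(`span {A^k x : k ∈ ℕ, x ∈ L} = ℂⁿ`).  Then `L` contains a vector `g` whose
orthogonal projection onto every eigenspace `ker (A - λ)` of `A` is nonzero,
i.e. a vector of maximal type for the resolution of identity of `A`. -/
theorem stmt_6 (n : ℕ) (A : Matrix (Fin n) (Fin n) ℂ) (hA : A.IsHermitian)
    (L : Submodule ℂ (EuclideanSpace ℂ (Fin n)))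
    (hL : (⨆ k : ℕ, Submodule.map (matEnd n A ^ k) L) = ⊤) :
    ∃ g ∈ L, ∀ μ : ℂ, (matEnd n A).HasEigenvalue μ →
      Submodule.orthogonalProjectionOnto ((matEnd n A).eigenspace μ) g ≠ 0 := by
  have hT : (matEnd n A).IsSymmetric := Matrix.isSymmetric_toEuclideanLin_iff.mpr hA
  obtain ⟨g, hgL, hg⟩ := Submodule.exists_mem_forall_notMem_of_not_le
    (p := fun μ : (matEnd n A).Eigenvalues => ((matEnd n A).eigenspace μ)ᗮ)
    fun μ => hT.not_le_orthogonal_eigenspace hL μ.2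
  exact ⟨g, hgL, fun μ hμ h0 =>
    hg ⟨μ, hμ⟩ (Submodule.orthogonalProjectionOnto_eq_zero_iff.mp h0)⟩
end

section
/- Let Σ be an n×n nonnegative matrix measure on ℝ, ρ a finite Borel measure equivalent to Σ, and Ψ a Borel measurable density of Σ with respect to ρ with Ψ(t) positive semidefinite for all t. Let m ≥ 1 satisfy ρ{ t : rank Ψ(t) > m } = 0, and let e₁, …, e_m ∈ ℂⁿ be orthonormal vectors. For k ≤ m let Ψ_k(t) := (⟪Ψ(t) e_j, e_i⟫)_{1 ≤ i,j ≤ k} be the compressed k×k density. Then the following are equivalent: (i) for every k ≤ m and every i ≤ k, the set { t : rank Ψ_k(t) ≥ i } coincides with { t : rank Ψ(t) ≥ i } up to a ρ-null set (i.e. span{e₁,…,e_k} is a k-th Hellinger subspace for every k ≤ m); (ii) for every k ≤ m, the set { t : det Ψ_k(t) ≠ 0 } coincides with { t : rank Ψ(t) ≥ k } up to a ρ-null set. -/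
open MeasureTheory Matrix
open scoped ComplexOrder ComplexInnerProductSpace

/-!
Three facts from linear algebra suffice, applied pointwise in `t`: a compression of `Ψ(t)` has
rank at most `rank Ψ(t)`; `Ψ_i` is a principal submatrix of `Ψ_k` for `i ≤ k`, so
`rank Ψ_i ≤ rank Ψ_k`; and a `k × k` matrix has `det ≠ 0` iff its rank is `k`.
Thus `{det Ψ_k ≠ 0} = {rank Ψ_k ≥ k}`, which gives (i) ⇒ (ii); conversely, if
`rank Ψ(t) ≥ i` then (ii) gives `det Ψ_i(t) ≠ 0`, hence `i = rank Ψ_i(t) ≤ rank Ψ_k(t)`.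
-/

namespace Matrix

theorem det_ne_zero_iff_card_le_rank {ι K : Type*} [Fintype ι] [DecidableEq ι] [Field K]
    (A : Matrix ι ι K) : A.det ≠ 0 ↔ Fintype.card ι ≤ A.rank := by
  refine ⟨fun h => (rank_of_det_ne_zero h).ge, fun h => ?_⟩
  have hrange : LinearMap.range A.mulVecLin = ⊤ :=
    Submodule.eq_top_of_finrank_eq <| by
      rw [Module.finrank_fintype_fun_eq_card]
      exact le_antisymm (rank_le_card_width A) h
  have hunit : IsUnit A := mulVec_surjective_iff_isUnit.mp (LinearMap.range_eq_top.mp hrange)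
  exact (A.isUnit_iff_isUnit_det.mp hunit).ne_zero

variable {𝕜 n ι κ : Type*} [RCLike 𝕜] [Fintype n] [DecidableEq n]

/-- The paper's `Ψ_k` for `f = (e₁, …, e_k)`. Since Mathlib's inner product is conjugate-linear in
its first argument, this is the entrywise conjugate of the matrix of the compression of `A` to
`span f`; rank and determinant vanishing are unaffected. -/
def compression (A : Matrix n n 𝕜) (f : ι → EuclideanSpace 𝕜 n) : Matrix ι ι 𝕜 :=
  of fun p q => inner 𝕜 (toEuclideanLin A (f q)) (f p)

theorem compression_comp (A : Matrix n n 𝕜) (f : ι → EuclideanSpace 𝕜 n) (g : κ → ι) :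
    compression A (f ∘ g) = (compression A f).submatrix g g :=
  rfl

theorem compression_eq_transpose (A : Matrix n n 𝕜) (f : ι → EuclideanSpace 𝕜 n) :
    compression A f = ((of fun x q => f q x)ᴴ * Aᴴ * of fun x q => f q x)ᵀ := by
  ext p q
  simp only [compression, of_apply, transpose_apply, mul_apply, conjTranspose_apply,
    EuclideanSpace.inner_eq_star_dotProduct, toLpLin_apply, dotProduct, mulVec,
    Pi.star_apply, star_sum, star_mul', Finset.mul_sum, Finset.sum_mul]
  refine Finset.sum_congr rfl fun x _ => Finset.sum_congr rfl fun y _ => ?_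
  ring

theorem rank_compression_le [Fintype ι] (A : Matrix n n 𝕜) (f : ι → EuclideanSpace 𝕜 n) :
    (compression A f).rank ≤ A.rank := by
  rw [compression_eq_transpose, rank_transpose, ← rank_conjTranspose A]
  exact (rank_mul_le_left _ _).trans (rank_mul_le_right _ _)

theorem card_le_rank_compression_iff [Fintype ι] [Fintype κ] [DecidableEq κ]
    {A : Matrix n n 𝕜} {f : ι → EuclideanSpace 𝕜 n} (g : κ → ι)
    (hdet : (compression A (f ∘ g)).det ≠ 0 ↔ Fintype.card κ ≤ A.rank) :
    Fintype.card κ ≤ (compression A f).rank ↔ Fintype.card κ ≤ A.rank := by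
  refine ⟨fun h => h.trans (rank_compression_le A f), fun h => ?_⟩
  calc Fintype.card κ ≤ (compression A (f ∘ g)).rank :=
        (det_ne_zero_iff_card_le_rank _).mp (hdet.mpr h)
    _ ≤ (compression A f).rank := by
        rw [compression_comp]
        exact rank_submatrix_le _ _ _

end Matrix

theorem stmt_8_general (n m : ℕ) (ρ : Measure ℝ) (Ψ : ℝ → Matrix (Fin n) (Fin n) ℂ)
    (e : Fin m → EuclideanSpace ℂ (Fin n)) :
    (∀ (k : ℕ) (hk : k ≤ m), 1 ≤ k → ∀ i : ℕ, 1 ≤ i → i ≤ k →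
        {t : ℝ | i ≤ (Matrix.of fun p q : Fin k =>
            ⟪Matrix.toEuclideanLin (Ψ t) (e (Fin.castLE hk q)),
              e (Fin.castLE hk p)⟫).rank}
          =ᵐ[ρ] {t : ℝ | i ≤ (Ψ t).rank}) ↔
    (∀ (k : ℕ) (hk : k ≤ m), 1 ≤ k →
        {t : ℝ | (Matrix.of fun p q : Fin k =>
            ⟪Matrix.toEuclideanLin (Ψ t) (e (Fin.castLE hk q)),
              e (Fin.castLE hk p)⟫).det ≠ 0}
          =ᵐ[ρ] {t : ℝ | k ≤ (Ψ t).rank}) := by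
  change (∀ (k : ℕ) (hk : k ≤ m), 1 ≤ k → ∀ i : ℕ, 1 ≤ i → i ≤ k →
      {t | i ≤ (compression (Ψ t) (e ∘ Fin.castLE hk)).rank} =ᵐ[ρ] {t | i ≤ (Ψ t).rank}) ↔
    (∀ (k : ℕ) (hk : k ≤ m), 1 ≤ k →
      {t | (compression (Ψ t) (e ∘ Fin.castLE hk)).det ≠ 0} =ᵐ[ρ] {t | k ≤ (Ψ t).rank})
  have hdet (k : ℕ) (hk : k ≤ m) (t : ℝ) :
      (compression (Ψ t) (e ∘ Fin.castLE hk)).det ≠ 0 ↔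
        k ≤ (compression (Ψ t) (e ∘ Fin.castLE hk)).rank := by
    simpa only [Fintype.card_fin] using det_ne_zero_iff_card_le_rank (compression (Ψ t) (e ∘ Fin.castLE hk))
  constructor
  · intro H k hk hk1
    simpa only [hdet] using H k hk hk1 k hk1 le_rfl
  · intro H k hk _ i hi1 hik
    refine Filter.eventuallyEq_set.mpr ?_
    filter_upwards [Filter.eventuallyEq_set.mp (H i (hik.trans hk) hi1)] with t ht
    have hnest : (compression (Ψ t) ((e ∘ Fin.castLE hk) ∘ Fin.castLE hik)).det ≠ 0 ↔
        Fintype.card (Fin i) ≤ (Ψ t).rank := by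
      rw [Fintype.card_fin]
      exact ht
    simpa only [Fintype.card_fin] using card_le_rank_compression_iff _ hnest

/-- **The determinant criterion (4) for Hellinger chains, finite-dimensional case.**
Let `S` be an `n × n` nonnegative matrix measure on `ℝ`, `ρ ∼ S` a finite Borel
measure, `Ψ` a positive semidefinite Borel density `dS/dρ`, and `m ≥ 1` with
`rank Ψ(t) ≤ m` `ρ`-a.e.  For orthonormal `e₁, …, e_m` and `k ≤ m` let
`Ψ_k(t) = (⟪Ψ(t) eⱼ, eᵢ⟫)_{i,j ≤ k}` be the compressed density.  Then
`span {e₁, …, e_k}` is a `k`-th Hellinger subspace for every `k ≤ m`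
(i.e. `{t : rank Ψ_k(t) ≥ i} = {t : rank Ψ(t) ≥ i}` mod `ρ` for all `i ≤ k ≤ m`)
if and only if `{t : det Ψ_k(t) ≠ 0} = {t : rank Ψ(t) ≥ k}` mod `ρ` for all `k ≤ m`. -/
theorem stmt_8 (n m : ℕ) (hm : 1 ≤ m)
    (S : VectorMeasure ℝ (Matrix (Fin n) (Fin n) ℂ))
    (hpos : ∀ δ : Set ℝ, MeasurableSet δ → (S δ).PosSemidef)
    (ρ : Measure ℝ) [IsFiniteMeasure ρ]
    (hequiv : ∀ δ : Set ℝ, MeasurableSet δ → (ρ δ = 0 ↔ S δ = 0))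
    (Ψ : ℝ → Matrix (Fin n) (Fin n) ℂ)
    (hΨmeas : ∀ i j, Measurable fun t => Ψ t i j)
    (hΨpos : ∀ t, (Ψ t).PosSemidef)
    (hdens : ∀ δ : Set ℝ, MeasurableSet δ → ∀ i j, S δ i j = ∫ t in δ, Ψ t i j ∂ρ)
    (hm₁ : ρ {t | m < (Ψ t).rank} = 0)
    (e : Fin m → EuclideanSpace ℂ (Fin n)) (he : Orthonormal ℂ e) :
    (∀ (k : ℕ) (hk : k ≤ m), 1 ≤ k → ∀ i : ℕ, 1 ≤ i → i ≤ k →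
        {t : ℝ | i ≤ (Matrix.of fun p q : Fin k =>
            ⟪Matrix.toEuclideanLin (Ψ t) (e (Fin.castLE hk q)),
              e (Fin.castLE hk p)⟫).rank}
          =ᵐ[ρ] {t : ℝ | i ≤ (Ψ t).rank}) ↔
    (∀ (k : ℕ) (hk : k ≤ m), 1 ≤ k →
        {t : ℝ | (Matrix.of fun p q : Fin k =>
            ⟪Matrix.toEuclideanLin (Ψ t) (e (Fin.castLE hk q)),
              e (Fin.castLE hk p)⟫).det ≠ 0}
          =ᵐ[ρ] {t : ℝ | k ≤ (Ψ t).rank}) :=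
  stmt_8_general n m ρ Ψ e
end

section
/- Let A be a Hermitian n×n complex matrix, let m be its maximal spectral multiplicity (the maximum over eigenvalues λ of dim ker(A − λI)), and let L be a cyclic subspace for A (span{ A^k x : k ∈ ℕ, x ∈ L } = ℂⁿ). Then there exists an m-dimensional subspace M ⊆ L that is itself cyclic for A, i.e. span{ A^k x : k ∈ ℕ, x ∈ M } = ℂⁿ. -/
open MeasureTheory Module

/-!
A Hermitian `A` is diagonalizable, so the spectral projection `P_μ` onto `ker (A - μ)` along the
other eigenspaces is a polynomial in `A`. Hence `P_μ` commutes with `A` and acts on the cyclic span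
of `M` as on `M` itself, so `M` is cyclic iff `P_μ M = ker (A - μ)` for every eigenvalue `μ`; in
particular `P_μ L = ker (A - μ)`, which has dimension at most `m`. Over an infinite field no
subspace is covered by finitely many subspaces not containing it, so vectors of `L` can be chosen
one at a time so that each new vector increases `dim P_μ M` for every `μ` at which it is not yet
maximal; after `m` steps every `P_μ M` is the whole eigenspace.
-/

open Submodule Polynomial

section Generic

variable {K V W ι : Type*} [Field K] [Infinite K] [AddCommGroup V] [Module K V]
  [AddCommGroup W] [Module K W]

theorem Submodule.exists_mem_notMem_of_not_le (L : Submodule K V)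
    (F : Finset (Submodule K V)) : ∃ x ∈ L, ∀ N ∈ F, ¬ L ≤ N → x ∉ N := by
  classical
  let F' := F.filter fun N => ¬ L ≤ N
  have hproper (N : F') : N.1.comap L.subtype ≠ ⊤ := by
    intro htop
    refine (Finset.mem_filter.mp N.2).2 fun x hx => ?_
    simpa using htop.ge (mem_top (x := (⟨x, hx⟩ : L)))
  obtain ⟨-, ⟨x, hxL⟩, -, hx⟩ := Set.ssubset_iff_exists.mp
    (iUnion_ssubset_of_forall_ne_top_of_card_lt Finset.univ _ hproper
      (by simp [ENat.card_eq_top_of_infinite]))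
  refine ⟨x, hxL, fun N hN hLN hxN => hx ?_⟩
  exact Set.mem_biUnion (x := ⟨N, Finset.mem_filter.mpr ⟨hN, hLN⟩⟩) (Finset.mem_univ _)
    (show (⟨x, hxL⟩ : L) ∈ N.comap L.subtype from hxN)

variable [FiniteDimensional K V] [FiniteDimensional K W]

theorem Submodule.exists_le_finrank_eq_forall_min_le_finrank_map (P : ι → V →ₗ[K] W)
    (s : Finset ι) (L : Submodule K V) {j : ℕ} (hj : j ≤ finrank K L) :
    ∃ M ≤ L, finrank K M = j ∧
      ∀ i ∈ s, min j (finrank K (L.map (P i))) ≤ finrank K (M.map (P i)) := by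
  classical
  induction j with
  | zero => exact ⟨⊥, bot_le, finrank_bot K V, fun i _ => by simp⟩
  | succ j ih =>
    obtain ⟨M, hML, hMj, hM⟩ := ih (by omega)
    let Q i := (M.map (P i)).comap (P i)
    obtain ⟨x, hxL, hx⟩ := L.exists_mem_notMem_of_not_le (insert M (s.image Q))
    have hxM : x ∉ M := hx M (Finset.mem_insert_self _ _) fun hLM => by
      have := finrank_mono hLM
      omega
    refine ⟨M ⊔ K ∙ x, sup_le hML ((span_singleton_le_iff_mem x L).mpr hxL),
      by rw [finrank_sup_span_singleton hxM, hMj], fun i hi => ?_⟩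
    rw [map_sup, map_span, Set.image_singleton]
    by_cases hLQ : L ≤ Q i
    · calc min (j + 1) (finrank K (L.map (P i)))
          ≤ finrank K (L.map (P i)) := min_le_right _ _
        _ ≤ finrank K (M.map (P i)) := finrank_mono (map_le_iff_le_comap.mpr hLQ)
        _ ≤ _ := finrank_mono le_sup_left
    · have hPx : P i x ∉ M.map (P i) :=
        hx (Q i) (Finset.mem_insert_of_mem (Finset.mem_image_of_mem Q hi)) hLQ
      rw [finrank_sup_span_singleton hPx]
      have := hM i hi
      omega

end Generic

section Spectral

variable {K V : Type*} [Field K] [AddCommGroup V] [Module K V] (T : Module.End K V)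

def cyclicSpan (M : Submodule K V) : Submodule K V :=
  ⨆ k : ℕ, M.map (T ^ k)

theorem map_aeval_le_cyclicSpan (p : K[X]) (M : Submodule K V) :
    M.map (aeval T p) ≤ cyclicSpan T M := by
  rintro _ ⟨x, hx, rfl⟩
  rw [aeval_eq_sum_range, LinearMap.sum_apply]
  refine sum_mem fun k _ => smul_mem _ _ ?_
  exact le_iSup (fun k => M.map (T ^ k)) k (mem_map_of_mem hx)

open Classical in
/-- When `T` is diagonalizable with spectrum in `S`, this is the projection onto `eigenspace μ`
along the other eigenspaces. -/
noncomputable def eigenprojection (S : Finset K) (μ : K) : Module.End K V :=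
  aeval T (Lagrange.basis S id μ)

variable {T} {S : Finset K} {μ : K}

theorem eigenprojection_apply_self (hμ : μ ∈ S) {x : V} (hx : x ∈ T.eigenspace μ) :
    eigenprojection T S μ x = x := by
  classical
  rw [eigenprojection, Module.End.aeval_apply_of_mem_apply_eq_smul
    (Module.End.mem_eigenspace_iff.mp hx), show eval μ _ = 1 from
    Lagrange.eval_basis_self (v := id) (Set.injOn_id _) hμ, one_smul]

theorem eigenprojection_apply_of_ne {ν : K} (hν : ν ∈ S) (hne : μ ≠ ν) {x : V}
    (hx : x ∈ T.eigenspace ν) : eigenprojection T S μ x = 0 := by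
  classical
  rw [eigenprojection, Module.End.aeval_apply_of_mem_apply_eq_smul
    (Module.End.mem_eigenspace_iff.mp hx), show eval ν _ = 0 from
    Lagrange.eval_basis_of_ne (v := id) hne hν, zero_smul]

theorem eigenprojection_mem_eigenspace (hS : ∀ ν, T.HasEigenvalue ν → ν ∈ S)
    (htop : ⨆ ν, T.eigenspace ν = ⊤) (x : V) : eigenprojection T S μ x ∈ T.eigenspace μ := by
  refine iSup_induction (motive := fun x => eigenprojection T S μ x ∈ T.eigenspace μ)
    (fun ν => T.eigenspace ν) (htop ▸ mem_top : x ∈ ⨆ ν, T.eigenspace ν) ?_ (by simp) ?_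
  · intro ν v hv
    rcases eq_or_ne v 0 with rfl | hv0
    · simp
    have hνS := hS ν (Module.End.hasEigenvalue_of_hasEigenvector ⟨hv, hv0⟩)
    rcases eq_or_ne μ ν with rfl | hne
    · rwa [eigenprojection_apply_self hνS hv]
    · rw [eigenprojection_apply_of_ne hνS hne hv]
      exact zero_mem _
  · intro a b ha hb
    rw [map_add]
    exact add_mem ha hb

theorem range_eigenprojection (hS : ∀ ν, T.HasEigenvalue ν → ν ∈ S)
    (htop : ⨆ ν, T.eigenspace ν = ⊤) (hμ : μ ∈ S) :
    LinearMap.range (eigenprojection T S μ) = T.eigenspace μ :=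
  le_antisymm (LinearMap.range_le_iff_comap.mpr <| eq_top_iff.mpr fun x _ =>
    eigenprojection_mem_eigenspace hS htop x)
    fun x hx => ⟨x, eigenprojection_apply_self hμ hx⟩

theorem map_eigenprojection_cyclicSpan (hS : ∀ ν, T.HasEigenvalue ν → ν ∈ S)
    (htop : ⨆ ν, T.eigenspace ν = ⊤) (M : Submodule K V) :
    (cyclicSpan T M).map (eigenprojection T S μ) = M.map (eigenprojection T S μ) := by
  refine le_antisymm ?_
    (map_mono (le_iSup_of_le 0 (by rw [pow_zero, Module.End.one_eq_id, Submodule.map_id])))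
  rw [cyclicSpan, Submodule.map_iSup]
  refine iSup_le fun k => ?_
  rintro _ ⟨_, ⟨x, hx, rfl⟩, rfl⟩
  have hcomm : eigenprojection T S μ * T ^ k = T ^ k * eigenprojection T S μ := by
    classical
    simpa [eigenprojection] using
      ((Commute.all (Lagrange.basis S id μ) (X ^ k)).map (aeval T)).eq
  have hpow : (T ^ k) (eigenprojection T S μ x) = μ ^ k • eigenprojection T S μ x := by
    simpa using Module.End.aeval_apply_of_mem_apply_eq_smul (p := X ^ k)
      (Module.End.mem_eigenspace_iff.mp (eigenprojection_mem_eigenspace hS htop x))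
  rw [← Module.End.mul_apply, hcomm, Module.End.mul_apply, hpow, ← map_smul]
  exact mem_map_of_mem (smul_mem _ _ hx)

theorem cyclicSpan_eq_top_iff (hS : ∀ ν, T.HasEigenvalue ν → ν ∈ S)
    (htop : ⨆ ν, T.eigenspace ν = ⊤) {M : Submodule K V} :
    cyclicSpan T M = ⊤ ↔ ∀ μ ∈ S, M.map (eigenprojection T S μ) = T.eigenspace μ := by
  refine ⟨fun hM μ hμ => ?_, fun hM => ?_⟩
  · rw [← map_eigenprojection_cyclicSpan hS htop, hM, Submodule.map_top,
      range_eigenprojection hS htop hμ]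
  · rw [eq_top_iff, ← htop]
    refine iSup_le fun μ => ?_
    by_cases hμ : μ ∈ S
    · exact hM μ hμ ▸ map_aeval_le_cyclicSpan T _ M
    · have : T.eigenspace μ = ⊥ := by simpa [Module.End.hasEigenvalue_iff] using mt (hS μ) hμ
      exact this ▸ bot_le

end Spectral

/-- **Second assertion of Corollary 3, finite-dimensional case.**
Let `A` be a Hermitian `n × n` matrix with maximal spectral multiplicity `m`
(the greatest of the eigenspace dimensions) and let `L` be a cyclic subspace for
`A` (`span {A^k x : k ∈ ℕ, x ∈ L} = ℂⁿ`).  Then there exists an `m`-dimensional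
subspace `M ⊆ L` which is itself cyclic for `A`. -/
theorem stmt_10 (n m : ℕ) (A : Matrix (Fin n) (Fin n) ℂ) (hA : A.IsHermitian)
    (hm : IsGreatest {d : ℕ | ∃ μ : ℂ, (matEnd n A).HasEigenvalue μ ∧
      d = Module.finrank ℂ ((matEnd n A).eigenspace μ)} m)
    (L : Submodule ℂ (EuclideanSpace ℂ (Fin n)))
    (hL : (⨆ k : ℕ, Submodule.map (matEnd n A ^ k) L) = ⊤) :
    ∃ M : Submodule ℂ (EuclideanSpace ℂ (Fin n)), M ≤ L ∧
      Module.finrank ℂ M = m ∧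
      (⨆ k : ℕ, Submodule.map (matEnd n A ^ k) M) = ⊤ := by
  set T := matEnd n A
  have htop : ⨆ μ, T.eigenspace μ = ⊤ := orthogonal_eq_bot_iff.mp
    (Matrix.isSymmetric_toEuclideanLin_iff.mpr hA).orthogonalComplement_iSup_eigenspaces_eq_bot
  set S := T.finite_hasEigenvalue.toFinset
  have hS : ∀ μ, T.HasEigenvalue μ → μ ∈ S := fun μ => T.finite_hasEigenvalue.mem_toFinset.mpr
  have hLμ : ∀ μ ∈ S, L.map (eigenprojection T S μ) = T.eigenspace μ :=
    (cyclicSpan_eq_top_iff hS htop).mp hL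
  obtain ⟨μ₀, hμ₀, rfl⟩ := hm.1
  have hmL : finrank ℂ (T.eigenspace μ₀) ≤ finrank ℂ L :=
    hLμ μ₀ (hS μ₀ hμ₀) ▸ finrank_map_le _ L
  obtain ⟨M, hML, hMm, hM⟩ := exists_le_finrank_eq_forall_min_le_finrank_map
    (eigenprojection T S) S L hmL
  refine ⟨M, hML, hMm, (cyclicSpan_eq_top_iff hS htop).mpr fun μ hμ => ?_⟩
  refine eq_of_le_of_finrank_le (hLμ μ hμ ▸ map_mono hML) ?_
  have hμm := hm.2 ⟨μ, T.finite_hasEigenvalue.mem_toFinset.mp hμ, rfl⟩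
  have hMμ := hM μ hμ
  rw [hLμ μ hμ] at hMμ
  omega
end

section
/- Let A be a Hermitian n×n complex matrix with maximal spectral multiplicity m, and for each eigenvalue λ let P_λ be the orthogonal projection onto ker(A − λI). Let e₁, …, e_m ∈ ℂⁿ be orthonormal vectors that are pairwise spectrally orthogonal with respect to A, i.e. ⟪P_λ e_j, e_i⟫ = 0 for all i ≠ j and every eigenvalue λ. Then the chain span{e₁} ⊂ span{e₁,e₂} ⊂ … ⊂ span{e₁,…,e_m} is a Hellinger chain — that is, for every k ≤ m and every eigenvalue λ, rank((⟪P_λ e_j, e_i⟫)_{1 ≤ i,j ≤ k}) = min(k, dim ker(A − λI)) — if and only if for every i ≤ m and every eigenvalue λ: P_λ e_i ≠ 0 exactly when dim ker(A − λI) ≥ i. -/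
/-!
Spectral orthogonality makes the matrix `(⟪P_λ e_j, e_i⟫)_{i,j ≤ k}` diagonal, and its diagonal
entry `⟪P_λ e_i, e_i⟫ = ‖P_λ e_i‖²` vanishes exactly when `P_λ e_i = 0`. Its rank therefore counts
the `i ≤ k` with `λ ∈ Γ(e_i)`, and such a count equals `min k d` for every `k` if and only if the
`i`-th vector is counted exactly when `i ≤ d`.
-/

open MeasureTheory Module
open scoped ComplexInnerProductSpace

namespace Nat

variable {p : ℕ → Prop} [DecidablePred p] {i d : ℕ}

theorem count_add_one_eq_min_iff (h : count p i = min i d) :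
    count p (i + 1) = min (i + 1) d ↔ (p i ↔ i < d) := by
  rw [count_succ, h]
  by_cases hp : p i <;> by_cases hi : i < d <;> simp [hp, hi] <;> omega

theorem count_eq_min_iff {m : ℕ} :
    (∀ k ≤ m, count p k = min k d) ↔ ∀ i < m, (p i ↔ i < d) := by
  refine ⟨fun h i hi => ?_, fun h k hk => ?_⟩
  · exact (count_add_one_eq_min_iff (h i hi.le)).1 (h (i + 1) hi)
  · induction k with
    | zero => simp
    | succ k ih => exact (count_add_one_eq_min_iff (ih (by omega))).2 (h k hk)

end Nat

open Count in
theorem Fin.card_subtype_castLE_eq_count {m k : ℕ} (hk : k ≤ m) (q : Fin m → Prop)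
    [DecidablePred q] :
    Nat.card {i : Fin k // q (Fin.castLE hk i)} =
      Nat.count (fun i => ∃ h : i < m, q ⟨i, h⟩) k := by
  rw [Nat.count_eq_card_fintype, ← Nat.card_eq_fintype_card]
  exact Nat.card_congr
    { toFun i := ⟨i.1, i.1.2, i.1.2.trans_le hk, i.2⟩
      invFun i := ⟨⟨i.1, i.2.1⟩, i.2.2.2⟩
      left_inv _ := rfl
      right_inv _ := rfl }

namespace Submodule

open scoped InnerProductSpace

variable {𝕜 E : Type*} [RCLike 𝕜] [NormedAddCommGroup E] [InnerProductSpace 𝕜 E]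
  (K : Submodule 𝕜 E) [K.HasOrthogonalProjection]

theorem inner_orthogonalProjectionOnto_self_eq_zero_iff (v : E) :
    ⟪(K.orthogonalProjectionOnto v : E), v⟫_𝕜 = 0 ↔ K.orthogonalProjectionOnto v = 0 := by
  rw [← inner_orthogonalProjectionOnto_eq_of_mem_left, inner_self_eq_zero]

theorem rank_inner_orthogonalProjectionOnto_of_pairwise {ι : Type*} [Fintype ι] [DecidableEq ι]
    (v : ι → E)
    (horth : Pairwise fun i j => ⟪(K.orthogonalProjectionOnto (v j) : E), v i⟫_𝕜 = 0) :
    (Matrix.of fun i j => ⟪(K.orthogonalProjectionOnto (v j) : E), v i⟫_𝕜).rank =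
      Nat.card {i // K.orthogonalProjectionOnto (v i) ≠ 0} := by
  classical
  have hdiag : (Matrix.of fun i j => ⟪(K.orthogonalProjectionOnto (v j) : E), v i⟫_𝕜) =
      Matrix.diagonal fun i => ⟪(K.orthogonalProjectionOnto (v i) : E), v i⟫_𝕜 := by
    ext i j
    rcases eq_or_ne i j with rfl | hij
    · simp
    · simpa [hij] using horth hij
  rw [hdiag, Matrix.rank_diagonal, ← Nat.card_eq_fintype_card]
  exact Nat.card_congr (Equiv.subtypeEquivRight fun i =>
    (K.inner_orthogonalProjectionOnto_self_eq_zero_iff (v i)).not)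

end Submodule

theorem stmt_11_general (n m : ℕ) (A : Matrix (Fin n) (Fin n) ℂ)
    (e : Fin m → EuclideanSpace ℂ (Fin n))
    (horth : ∀ i j : Fin m, i ≠ j → ∀ μ : ℂ, (matEnd n A).HasEigenvalue μ →
      ⟪(Submodule.orthogonalProjectionOnto ((matEnd n A).eigenspace μ) (e j) :
          EuclideanSpace ℂ (Fin n)), e i⟫ = 0) :
    (∀ (k : ℕ) (hk : k ≤ m), 1 ≤ k → ∀ μ : ℂ, (matEnd n A).HasEigenvalue μ →
        (Matrix.of fun i j : Fin k =>
            ⟪(Submodule.orthogonalProjectionOnto ((matEnd n A).eigenspace μ)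
                (e (Fin.castLE hk j)) : EuclideanSpace ℂ (Fin n)),
              e (Fin.castLE hk i)⟫).rank
          = min k (Module.finrank ℂ ((matEnd n A).eigenspace μ))) ↔
    (∀ i : Fin m, ∀ μ : ℂ, (matEnd n A).HasEigenvalue μ →
        (Submodule.orthogonalProjectionOnto ((matEnd n A).eigenspace μ) (e i) ≠ 0 ↔
          (i : ℕ) + 1 ≤ Module.finrank ℂ ((matEnd n A).eigenspace μ))) := by
  classical
  set P := fun μ => Submodule.orthogonalProjectionOnto ((matEnd n A).eigenspace μ)
  have hrank : ∀ μ, (matEnd n A).HasEigenvalue μ → ∀ k (hk : k ≤ m),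
      (Matrix.of fun i j : Fin k => ⟪(P μ (e (Fin.castLE hk j)) : EuclideanSpace ℂ (Fin n)),
        e (Fin.castLE hk i)⟫).rank = Nat.count (fun i => ∃ h : i < m, P μ (e ⟨i, h⟩) ≠ 0) k :=
    fun μ hμ k hk => by
      rw [Submodule.rank_inner_orthogonalProjectionOnto_of_pairwise _ _
        fun i j hij => horth _ _ ((Fin.castLE_injective hk).ne hij) μ hμ,
        Fin.card_subtype_castLE_eq_count hk fun i => P μ (e i) ≠ 0]
  refine ⟨fun H i μ hμ => ?_, fun H k hk _ μ hμ => ?_⟩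
  · have hcount : ∀ k ≤ m, Nat.count (fun i => ∃ h : i < m, P μ (e ⟨i, h⟩) ≠ 0) k =
        min k (finrank ℂ ((matEnd n A).eigenspace μ)) := by
      rintro (_ | k) hk
      · simp
      · exact (hrank μ hμ _ hk).symm.trans (H _ hk k.succ_pos μ hμ)
    exact (exists_prop_of_true i.2).symm.trans (Nat.count_eq_min_iff.1 hcount i i.2)
  · rw [hrank μ hμ k hk]
    exact Nat.count_eq_min_iff.2 (fun i hi => (exists_prop_of_true hi).trans (H ⟨i, hi⟩ μ hμ)) k hk

/-- **The remark of Section 5 on spectrally orthogonal vectors.**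
Let `A` be a Hermitian `n × n` matrix with maximal spectral multiplicity `m`, and
let `e₁, …, e_m` be orthonormal vectors that are pairwise spectrally orthogonal
(`⟪Pₗ eⱼ, eᵢ⟫ = 0` for `i ≠ j` and every eigenvalue `λ`, `Pₗ` the orthogonal
projection onto `ker (A - λ)`).  Then `span{e₁} ⊂ … ⊂ span{e₁,…,e_m}` is a
Hellinger chain, i.e. `rank (⟪Pₗ eⱼ, eᵢ⟫)_{i,j ≤ k} = min k (dim ker (A - λ))`
for all `1 ≤ k ≤ m` and eigenvalues `λ`, if and only if for every `i ≤ m` and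
every eigenvalue `λ`: `Pₗ eᵢ ≠ 0` exactly when `dim ker (A - λ) ≥ i`. -/
theorem stmt_11 (n m : ℕ) (A : Matrix (Fin n) (Fin n) ℂ) (hA : A.IsHermitian)
    (hm : IsGreatest {d : ℕ | ∃ μ : ℂ, (matEnd n A).HasEigenvalue μ ∧
      d = Module.finrank ℂ ((matEnd n A).eigenspace μ)} m)
    (e : Fin m → EuclideanSpace ℂ (Fin n)) (he : Orthonormal ℂ e)
    (horth : ∀ i j : Fin m, i ≠ j → ∀ μ : ℂ, (matEnd n A).HasEigenvalue μ →
      ⟪(Submodule.orthogonalProjectionOnto ((matEnd n A).eigenspace μ) (e j) :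
          EuclideanSpace ℂ (Fin n)), e i⟫ = 0) :
    (∀ (k : ℕ) (hk : k ≤ m), 1 ≤ k → ∀ μ : ℂ, (matEnd n A).HasEigenvalue μ →
        (Matrix.of fun i j : Fin k =>
            ⟪(Submodule.orthogonalProjectionOnto ((matEnd n A).eigenspace μ)
                (e (Fin.castLE hk j)) : EuclideanSpace ℂ (Fin n)),
              e (Fin.castLE hk i)⟫).rank
          = min k (Module.finrank ℂ ((matEnd n A).eigenspace μ))) ↔
    (∀ i : Fin m, ∀ μ : ℂ, (matEnd n A).HasEigenvalue μ →
        (Submodule.orthogonalProjectionOnto ((matEnd n A).eigenspace μ) (e i) ≠ 0 ↔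
          (i : ℕ) + 1 ≤ Module.finrank ℂ ((matEnd n A).eigenspace μ))) :=
  stmt_11_general n m A e horth
end

section
/- Let A be a Hermitian n×n complex matrix with spectral resolution E (so E(δ) is the matrix of the orthogonal projection onto the sum of eigenspaces ker(A − λI) over eigenvalues λ ∈ δ). Let Σ be an r×r nonnegative matrix measure on ℝ with Σ(ℝ) = I_r (a generalized resolution of the identity on ℂʳ). Then the following are equivalent: (i) Σ is spectrally subordinated to E, i.e. Σ(δ) = 0 for every Borel set δ containing no eigenvalue of A, and for every eigenvalue λ of A, rank Σ({λ}) ≤ dim ker(A − λI); (ii) there exists an n×r complex matrix W with Wᴴ W = I_r such that Σ(δ) = Wᴴ E(δ) W for every Borel set δ. -/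
open MeasureTheory Module Matrix
open scoped ComplexOrder

/-- The spectral resolution of identity of a Hermitian matrix `A`, as a
matrix-valued set function: `specRes n A δ` is the matrix of the orthogonal
projection onto the sum of the eigenspaces `ker (A - λ)` over eigenvalues
`λ ∈ δ`. -/
noncomputable def specRes (n : ℕ) (A : Matrix (Fin n) (Fin n) ℂ) (δ : Set ℝ) :
    Matrix (Fin n) (Fin n) ℂ :=
  Matrix.toEuclideanLin.symm
    ((⨆ μ ∈ δ, (matEnd n A).eigenspace (μ : ℂ)).subtype ∘ₗ
      (Submodule.orthogonalProjection (⨆ μ ∈ δ, (matEnd n A).eigenspace (μ : ℂ))).toLinearMap)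

namespace Matrix

variable {m n ι κ R 𝕜 : Type*}

lemma exists_conjTranspose_mul_self_eq_of_card_le [Fintype m] [Fintype ι] [NonUnitalCommSemiring R]
    [StarRing R] (T : Matrix m n R) (p : m → Prop) [DecidablePred p] (hT : ∀ i, ¬ p i → T i = 0)
    (hcard : Fintype.card {i // p i} ≤ Fintype.card ι) :
    ∃ C : Matrix ι n R, Cᴴ * C = Tᴴ * T := by
  obtain ⟨f⟩ := Function.Embedding.nonempty_of_card_le hcard
  refine ⟨of (Function.extend f (fun i => T i) 0), ?_⟩
  ext a b
  simp only [mul_apply, conjTranspose_apply, of_apply]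
  calc ∑ k, star (Function.extend f (fun i => T i) 0 k a) * Function.extend f (fun i => T i) 0 k b
      = ∑ i : {i // p i}, star (T i a) * T i b := by
        refine (Fintype.sum_of_injective f f.injective _ _ ?_ fun i => ?_).symm
        · intro k hk
          rw [Function.extend_apply' _ _ _ fun ⟨i, hi⟩ => hk ⟨i, hi⟩]
          simp
        · simp [f.injective.extend_apply]
    _ = ∑ i, star (T i a) * T i b := by
        rw [← Finset.sum_subtype (Finset.univ.filter p) (by simp) (fun i => star (T i a) * T i b),
          Finset.sum_filter_of_ne]
        intro i _ hi
        by_contra hpi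
        simp [hT i hpi] at hi

lemma PosSemidef.exists_conjTranspose_mul_self_eq_of_rank_le [Fintype n] [DecidableEq n]
    [Fintype ι] [RCLike 𝕜] {S : Matrix n n 𝕜} (hS : S.PosSemidef)
    (hrank : S.rank ≤ Fintype.card ι) :
    ∃ C : Matrix ι n 𝕜, Cᴴ * C = S := by
  -- `T = √Λ Uᴴ` is a square root of `S = U Λ Uᴴ` whose rows vanish at the zero eigenvalues.
  let U : Matrix n n 𝕜 := hS.1.eigenvectorUnitary
  let T : Matrix n n 𝕜 := diagonal (fun i => (√(hS.1.eigenvalues i) : 𝕜)) * star U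
  have hT : Tᴴ * T = S := by
    have hsqrt : (fun i => star (√(hS.1.eigenvalues i) : 𝕜) * √(hS.1.eigenvalues i)) =
        RCLike.ofReal ∘ hS.1.eigenvalues := by
      ext i
      simp [← RCLike.ofReal_mul, Real.mul_self_sqrt (hS.eigenvalues_nonneg i)]
    conv_rhs => rw [hS.1.spectral_theorem, Unitary.conjStarAlgAut_apply]
    rw [← star_eq_conjTranspose, star_mul, star_star, star_eq_conjTranspose (diagonal _),
      diagonal_conjTranspose, Matrix.mul_assoc, ← Matrix.mul_assoc (diagonal _),
      diagonal_mul_diagonal]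
    simp only [Pi.star_apply]
    rw [hsqrt, Matrix.mul_assoc]
  obtain ⟨C, hC⟩ := T.exists_conjTranspose_mul_self_eq_of_card_le (fun i => hS.1.eigenvalues i ≠ 0)
    (fun i hi => by ext j; simp [T, not_not.1 hi]) (hS.1.rank_eq_card_non_zero_eigs ▸ hrank)
  exact ⟨C, hC.trans hT⟩

lemma conjTranspose_mul_mul_self_of_unitary [Fintype m] [DecidableEq m] [CommSemiring R]
    [StarRing R]
    {U : Matrix m m R} (hU : Uᴴ * U = 1) (B : Matrix m n R) : (U * B)ᴴ * (U * B) = Bᴴ * B := by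
  rw [conjTranspose_mul, Matrix.mul_assoc, ← Matrix.mul_assoc Uᴴ, hU, Matrix.one_mul]

lemma conjTranspose_mul_conj_mul_of_unitary [Fintype m] [DecidableEq m] [CommSemiring R]
    [StarRing R]
    {U : Matrix m m R} (hU : Uᴴ * U = 1) (B : Matrix m n R) (D : Matrix m m R) :
    (U * B)ᴴ * (U * D * Uᴴ) * (U * B) = Bᴴ * D * B := by
  simp only [conjTranspose_mul, Matrix.mul_assoc, ← Matrix.mul_assoc Uᴴ U, hU, Matrix.one_mul]

def ofFibers (g : m → κ) (C : ∀ t, Matrix {i // g i = t} n R) : Matrix m n R :=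
  of fun i => C (g i) ⟨i, rfl⟩

lemma conjTranspose_ofFibers_mul_diagonal_mul_ofFibers [Fintype m] [DecidableEq m] [DecidableEq κ]
    [CommSemiring R] [StarRing R] (g : m → κ) (C : ∀ t, Matrix {i // g i = t} n R) (s : Set κ)
    [DecidablePred (· ∈ s)] :
    (ofFibers g C)ᴴ * diagonal (fun i => if g i ∈ s then (1 : R) else 0) * ofFibers g C =
      ∑ t ∈ Finset.univ.image g with t ∈ s, (C t)ᴴ * C t := by
  ext a b
  calc ((ofFibers g C)ᴴ * diagonal (fun i => if g i ∈ s then (1 : R) else 0) * ofFibers g C) a b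
      = ∑ i with g i ∈ s, star (C (g i) ⟨i, rfl⟩ a) * C (g i) ⟨i, rfl⟩ b := by
        rw [mul_apply, Finset.sum_filter]
        refine Finset.sum_congr rfl fun i _ => ?_
        rw [mul_diagonal, conjTranspose_apply]
        split_ifs <;> simp [ofFibers]
    _ = ∑ t ∈ Finset.univ.image g with t ∈ s,
          ∑ i ∈ {i | g i ∈ s} with g i = t, star (C (g i) ⟨i, rfl⟩ a) * C (g i) ⟨i, rfl⟩ b :=
        (Finset.sum_fiberwise_of_maps_to (by simp) _).symm
    _ = _ := by
        rw [sum_apply]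
        refine Finset.sum_congr rfl fun t ht => ?_
        have hts : t ∈ s := (Finset.mem_filter.1 ht).2
        rw [mul_apply, Finset.filter_filter, Finset.sum_subtype _ (p := fun i => g i = t)
          fun i => by simpa using fun hi => hi ▸ hts]
        refine Fintype.sum_congr _ _ fun ⟨i, hi⟩ => ?_
        subst hi
        rfl

end Matrix

namespace MeasureTheory.VectorMeasure

variable {α M : Type*} [MeasurableSpace α] [MeasurableSingletonClass α] [AddCommMonoid M]
  [TopologicalSpace M] [T2Space M]

lemma apply_finset_eq_sum_singleton (v : VectorMeasure α M) (F : Finset α) :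
    v F = ∑ t ∈ F, v {t} := by
  rw [← v.of_biUnion_finset (fun _ _ _ _ h => Set.disjoint_singleton.2 h)
    fun _ _ => measurableSet_singleton _, ← Finset.set_biUnion_coe, Set.biUnion_of_singleton]

lemma apply_eq_sum_singleton_of_disjoint_eq_zero (v : VectorMeasure α M) (F : Finset α)
    (hF : ∀ s, MeasurableSet s → Disjoint s F → v s = 0) {s : Set α} (hs : MeasurableSet s)
    [DecidablePred (· ∈ s)] :
    v s = ∑ t ∈ F with t ∈ s, v {t} := by
  have hsub : (↑(F.filter (· ∈ s)) : Set α) ⊆ s := fun t ht => (Finset.mem_filter.1 ht).2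
  have hmeas : MeasurableSet (↑(F.filter (· ∈ s)) : Set α) := (Finset.finite_toSet _).measurableSet
  have hdisj : Disjoint (s \ ↑(F.filter (· ∈ s))) F :=
    Set.disjoint_left.2 fun t ht htF => ht.2 (Finset.mem_filter.2 ⟨htF, ht.1⟩)
  rw [← v.of_add_of_sdiff hmeas hs hsub, hF _ (hs.diff hmeas) hdisj, add_zero,
    apply_finset_eq_sum_singleton]

end MeasureTheory.VectorMeasure

section SpectralResolution

variable {n : ℕ} {A : Matrix (Fin n) (Fin n) ℂ}

noncomputable def spectralSubspace (n : ℕ) (A : Matrix (Fin n) (Fin n) ℂ) (δ : Set ℝ) :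
    Submodule ℂ (EuclideanSpace ℂ (Fin n)) :=
  ⨆ μ ∈ δ, (matEnd n A).eigenspace (μ : ℂ)

lemma toEuclideanLin_specRes (δ : Set ℝ) :
    toEuclideanLin (specRes n A δ) = (spectralSubspace n A δ).starProjection.toLinearMap :=
  LinearEquiv.apply_symm_apply _ _

lemma spectralSubspace_singleton (μ : ℝ) :
    spectralSubspace n A {μ} = (matEnd n A).eigenspace (μ : ℂ) := by
  simp [spectralSubspace]

lemma specRes_eq_zero {δ : Set ℝ} (hδ : ∀ μ ∈ δ, ¬ (matEnd n A).HasEigenvalue (μ : ℂ)) :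
    specRes n A δ = 0 := by
  have : spectralSubspace n A δ = ⊥ :=
    iSup₂_eq_bot.2 fun μ hμ => not_not.1 (Module.End.hasEigenvalue_iff.not.1 (hδ μ hμ))
  apply toEuclideanLin.injective
  rw [toEuclideanLin_specRes, this, Submodule.starProjection_bot, map_zero]
  rfl

lemma rank_specRes (δ : Set ℝ) :
    (specRes n A δ).rank = finrank ℂ (spectralSubspace n A δ) := by
  rw [rank_eq_finrank_range_toLin _ (EuclideanSpace.basisFun _ ℂ).toBasis
    (EuclideanSpace.basisFun _ ℂ).toBasis, ← toEuclideanLin_eq_toLin_orthonormal,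
    toEuclideanLin_specRes, Submodule.range_starProjection]

namespace Matrix.IsHermitian

variable (hA : A.IsHermitian)

lemma matEnd_eigenvectorBasis (j : Fin n) :
    matEnd n A (hA.eigenvectorBasis j) = (hA.eigenvalues j : ℂ) • hA.eigenvectorBasis j := by
  apply WithLp.ofLp_injective
  rw [matEnd, toLpLin_apply, hA.mulVec_eigenvectorBasis j, RCLike.real_smul_eq_coe_smul (K := ℂ)]
  rfl

lemma eigenvectorBasis_mem_eigenspace (j : Fin n) :
    hA.eigenvectorBasis j ∈ (matEnd n A).eigenspace (hA.eigenvalues j : ℂ) :=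
  Module.End.mem_eigenspace_iff.2 (hA.matEnd_eigenvectorBasis j)

lemma eigenvectorBasis_mem_spectralSubspace {δ : Set ℝ} {j : Fin n} (hj : hA.eigenvalues j ∈ δ) :
    hA.eigenvectorBasis j ∈ spectralSubspace n A δ :=
  Submodule.mem_iSup_of_mem _ (Submodule.mem_iSup_of_mem hj (hA.eigenvectorBasis_mem_eigenspace j))

lemma eigenvectorBasis_mem_orthogonal_spectralSubspace {δ : Set ℝ} {j : Fin n}
    (hj : hA.eigenvalues j ∉ δ) :
    hA.eigenvectorBasis j ∈ (spectralSubspace n A δ)ᗮ := by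
  have hortho : spectralSubspace n A δ ⟂ (matEnd n A).eigenspace (hA.eigenvalues j : ℂ) :=
    Submodule.isOrtho_iSup_left.2 fun μ => Submodule.isOrtho_iSup_left.2 fun hμ =>
      (isSymmetric_toEuclideanLin_iff.2 hA).orthogonalFamily_eigenspaces.isOrtho
        (by exact_mod_cast ne_of_mem_of_not_mem hμ hj)
  exact hortho.ge (hA.eigenvectorBasis_mem_eigenspace j)

lemma conj_diagonal_mulVec_eigenvectorBasis (f : Fin n → ℂ) (j : Fin n) :
    ((hA.eigenvectorUnitary : Matrix (Fin n) (Fin n) ℂ) * diagonal f *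
      (hA.eigenvectorUnitary : Matrix (Fin n) (Fin n) ℂ)ᴴ) *ᵥ ⇑(hA.eigenvectorBasis j) =
      f j • ⇑(hA.eigenvectorBasis j) := by
  rw [← mulVec_mulVec, ← mulVec_mulVec, ← star_eq_conjTranspose, star_eigenvectorUnitary_mulVec,
    diagonal_mulVec_single, ← smul_eq_mul, Pi.single_smul, mulVec_smul,
    eigenvectorUnitary_mulVec]

lemma specRes_eq (δ : Set ℝ) [DecidablePred (· ∈ δ)] :
    specRes n A δ = (hA.eigenvectorUnitary : Matrix (Fin n) (Fin n) ℂ) *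
      diagonal (fun i => if hA.eigenvalues i ∈ δ then 1 else 0) *
      (hA.eigenvectorUnitary : Matrix (Fin n) (Fin n) ℂ)ᴴ := by
  apply toEuclideanLin.injective
  refine hA.eigenvectorBasis.toBasis.ext fun j => ?_
  apply WithLp.ofLp_injective
  rw [toEuclideanLin_specRes, OrthonormalBasis.coe_toBasis]
  simp only [ContinuousLinearMap.coe_coe, toLpLin_apply, hA.conj_diagonal_mulVec_eigenvectorBasis]
  split_ifs with hj
  · rw [Submodule.starProjection_eq_self_iff.2 (hA.eigenvectorBasis_mem_spectralSubspace hj),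
      one_smul]
  · rw [(Submodule.starProjection_apply_eq_zero_iff _).2
      (hA.eigenvectorBasis_mem_orthogonal_spectralSubspace hj), zero_smul]
    rfl

lemma rank_specRes_eq_card (δ : Set ℝ) [DecidablePred (· ∈ δ)] :
    (specRes n A δ).rank = Fintype.card {i // hA.eigenvalues i ∈ δ} := by
  have hdet : IsUnit (hA.eigenvectorUnitary : Matrix (Fin n) (Fin n) ℂ)ᴴ.det := by
    simpa [← star_eq_conjTranspose] using UnitaryGroup.det_isUnit (star hA.eigenvectorUnitary)
  rw [hA.specRes_eq δ, rank_mul_eq_left_of_isUnit_det _ _ hdet,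
    rank_mul_eq_right_of_isUnit_det _ _ (UnitaryGroup.det_isUnit _), rank_diagonal]
  simp

lemma finrank_eigenspace (μ : ℝ) :
    finrank ℂ ((matEnd n A).eigenspace (μ : ℂ)) = Fintype.card {i // hA.eigenvalues i = μ} := by
  classical
  rw [← spectralSubspace_singleton, ← rank_specRes, hA.rank_specRes_eq_card]
  simp

lemma hasEigenvalue_iff (μ : ℝ) :
    (matEnd n A).HasEigenvalue (μ : ℂ) ↔ ∃ i, hA.eigenvalues i = μ := by
  rw [Module.End.hasEigenvalue_iff, Ne, ← Submodule.finrank_eq_zero, hA.finrank_eigenspace,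
    Fintype.card_eq_zero_iff, not_isEmpty_iff, nonempty_subtype]

open Classical in
lemma exists_eq_conjTranspose_mul_diagonal_mul {ι : Type*} [Fintype ι] [DecidableEq ι]
    (S : VectorMeasure ℝ (Matrix ι ι ℂ)) (hpos : ∀ t, (S {t}).PosSemidef)
    (hzero : ∀ δ : Set ℝ, MeasurableSet δ →
      (∀ μ ∈ δ, ¬ (matEnd n A).HasEigenvalue (μ : ℂ)) → S δ = 0)
    (hrank : ∀ μ : ℝ, (matEnd n A).HasEigenvalue (μ : ℂ) →
      (S {μ}).rank ≤ finrank ℂ ((matEnd n A).eigenspace (μ : ℂ))) :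
    ∃ B : Matrix (Fin n) ι ℂ, ∀ δ : Set ℝ, MeasurableSet δ →
      S δ = Bᴴ * diagonal (fun i => if hA.eigenvalues i ∈ δ then (1 : ℂ) else 0) * B := by
  have hvanish : ∀ s : Set ℝ, MeasurableSet s →
      Disjoint s ↑(Finset.univ.image hA.eigenvalues) → S s = 0 :=
    fun s hs hdisj => hzero s hs fun μ hμ hev => by
      obtain ⟨i, rfl⟩ := (hA.hasEigenvalue_iff μ).1 hev
      exact Set.disjoint_left.1 hdisj hμ (by simp)
  have hfactor : ∀ t, ∃ C : Matrix {i // hA.eigenvalues i = t} ι ℂ, Cᴴ * C = S {t} := by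
    intro t
    refine (hpos t).exists_conjTranspose_mul_self_eq_of_rank_le ?_
    by_cases ht : (matEnd n A).HasEigenvalue (t : ℂ)
    · exact hA.finrank_eigenspace t ▸ hrank t ht
    · simp [hzero {t} (measurableSet_singleton t) (by simpa using ht)]
  choose C hC using hfactor
  refine ⟨ofFibers hA.eigenvalues C, fun δ hδ => ?_⟩
  rw [conjTranspose_ofFibers_mul_diagonal_mul_ofFibers,
    S.apply_eq_sum_singleton_of_disjoint_eq_zero _ hvanish hδ]
  exact Finset.sum_congr rfl fun t _ => (hC t).symm

end Matrix.IsHermitian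

end SpectralResolution

/-- **Theorem 2(b), finite-dimensional case (a supplement to Naimark's theorem).**
Let `A` be a Hermitian `n × n` matrix with resolution of identity `E = specRes n A`,
and let `S` be an `r × r` nonnegative matrix measure with `S(ℝ) = I` (a generalized
resolution of the identity on `ℂʳ`).  Then `S` is spectrally subordinated to `E`
(`S(δ) = 0` whenever `δ` contains no eigenvalue of `A`, and
`rank S({λ}) ≤ dim ker (A - λ)` for every eigenvalue `λ`) if and only if there is an
isometry `W : ℂʳ → ℂⁿ` (an `n × r` matrix with `Wᴴ W = I`) such that
`S(δ) = Wᴴ E(δ) W` for every Borel set `δ`. -/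
theorem stmt_12 (n r : ℕ) (A : Matrix (Fin n) (Fin n) ℂ) (hA : A.IsHermitian)
    (S : VectorMeasure ℝ (Matrix (Fin r) (Fin r) ℂ))
    (hpos : ∀ δ : Set ℝ, MeasurableSet δ → (S δ).PosSemidef)
    (hS1 : S Set.univ = 1) :
    ((∀ δ : Set ℝ, MeasurableSet δ →
        (∀ μ ∈ δ, ¬ (matEnd n A).HasEigenvalue (μ : ℂ)) → S δ = 0) ∧
      (∀ μ : ℝ, (matEnd n A).HasEigenvalue (μ : ℂ) →
        (S {μ}).rank ≤ Module.finrank ℂ ((matEnd n A).eigenspace (μ : ℂ)))) ↔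
    (∃ W : Matrix (Fin n) (Fin r) ℂ, Wᴴ * W = 1 ∧
      ∀ δ : Set ℝ, MeasurableSet δ → S δ = Wᴴ * specRes n A δ * W) := by
  classical
  let U : Matrix (Fin n) (Fin n) ℂ := hA.eigenvectorUnitary
  have hU : Uᴴ * U = 1 := Unitary.coe_star_mul_self hA.eigenvectorUnitary
  constructor
  · rintro ⟨hzero, hrank⟩
    obtain ⟨B, hB⟩ := hA.exists_eq_conjTranspose_mul_diagonal_mul S
      (fun t => hpos {t} (measurableSet_singleton t)) hzero hrank
    refine ⟨U * B, ?_, fun δ hδ => ?_⟩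
    · rw [conjTranspose_mul_mul_self_of_unitary hU, ← hS1, hB _ MeasurableSet.univ]
      simp
    · rw [hA.specRes_eq δ, conjTranspose_mul_conj_mul_of_unitary hU, hB δ hδ]
  · rintro ⟨W, -, hSW⟩
    refine ⟨fun δ hδ hδA => by rw [hSW δ hδ, specRes_eq_zero hδA, Matrix.mul_zero, Matrix.zero_mul],
      fun μ _ => ?_⟩
    rw [hSW {μ} (measurableSet_singleton μ), ← spectralSubspace_singleton, ← rank_specRes]
    exact (rank_mul_le_left _ _).trans (rank_mul_le_right _ _)
end

section
/- Let Σ be a countably additive vector measure on the Borel σ-algebra of ℝ with values in Matrix (Fin n) (Fin n) ℂ such that Σ(δ) is Hermitian for every Borel set δ. Then Σ can be expressed as a difference of two nonnegative matrix measures: there exist countably additive vector measures Σ₁, Σ₂ on the Borel sets of ℝ with values in Matrix (Fin n) (Fin n) ℂ, with Σ₁(δ) and Σ₂(δ) positive semidefinite for every Borel δ, such that Σ(δ) = Σ₁(δ) − Σ₂(δ) for every Borel δ. -/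
/-!
In finite dimensions a vector measure has finite total variation `ν`, since each coordinate is a
signed measure. Measuring the matrices in the operator norm, a Hermitian matrix `A` satisfies
`A ≤ ‖A‖ • 1`, so `ν(δ) • 1 - Σ(δ)` is positive semidefinite. Hence `Σ₁ := ν • 1` and
`Σ₂ := Σ₁ - Σ` decompose `Σ`.
-/

open MeasureTheory
open scoped ComplexOrder

open scoped Matrix.Norms.L2Operator MatrixOrder in
theorem Matrix.IsHermitian.posSemidef_algebraMap_sub {n : Type*} [Fintype n] [DecidableEq n]
    {A : Matrix n n ℂ} (hA : A.IsHermitian) {c : ℝ} (hc : ‖A‖ ≤ c) :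
    (algebraMap ℝ (Matrix n n ℂ) c - A).PosSemidef := by
  have hnorm : (algebraMap ℝ (Matrix n n ℂ) ‖A‖ - A).PosSemidef :=
    Matrix.le_iff.mp (IsSelfAdjoint.le_algebraMap_norm_self hA.isSelfAdjoint)
  have hgap : (algebraMap ℝ (Matrix n n ℂ) (c - ‖A‖)).PosSemidef := by
    rw [Algebra.algebraMap_eq_smul_one]
    exact Matrix.PosSemidef.one.smul (sub_nonneg.mpr hc)
  convert hnorm.add hgap using 1
  rw [map_sub]; abel

namespace MeasureTheory.VectorMeasure

variable {X : Type*} [MeasurableSpace X] {V : Type*} [NormedAddCommGroup V] [NormedSpace ℝ V]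

theorem isFiniteMeasure_variation_of_finiteDimensional [FiniteDimensional ℝ V]
    (μ : VectorMeasure X V) : IsFiniteMeasure μ.variation := by
  classical
  let b := Module.finBasis ℝ V
  let coord (k : Fin (Module.finrank ℝ V)) : SignedMeasure X :=
    μ.mapRange (b.coord k).toAddMonoidHom (b.coord k).continuous_of_finiteDimensional
  have hle : μ.variation ≤ ∑ k, ‖b k‖₊ • (coord k).totalVariation := by
    refine variation_le_of_forall_enorm_le fun E _ => ?_
    calc ‖μ E‖ₑ = ‖∑ k, coord k E • b k‖ₑ := by
          rw [← b.sum_repr (μ E)]; rfl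
      _ ≤ ∑ k, ‖coord k E • b k‖ₑ := enorm_sum_le _ _
      _ ≤ ∑ k, ‖b k‖₊ • (coord k).totalVariation E := by
          refine Finset.sum_le_sum fun k _ => ?_
          rw [enorm_smul, mul_comm, ENNReal.smul_def, smul_eq_mul, enorm_eq_nnnorm]
          gcongr
          exact (coord k).enorm_le_totalVariation E
      _ = (∑ k, ‖b k‖₊ • (coord k).totalVariation) E := by simp
  exact isFiniteMeasure_of_le _ hle

theorem exists_isFiniteMeasure_posSemidef_algebraMap_sub {n : Type*} [Fintype n] [DecidableEq n]
    (S : VectorMeasure X (Matrix n n ℂ)) (hS : ∀ δ, MeasurableSet δ → (S δ).IsHermitian) :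
    ∃ ν : Measure X, IsFiniteMeasure ν ∧
      ∀ δ, MeasurableSet δ → (algebraMap ℝ (Matrix n n ℂ) (ν.real δ) - S δ).PosSemidef := by
  open scoped Matrix.Norms.L2Operator in
  have := S.isFiniteMeasure_variation_of_finiteDimensional
  exact ⟨S.variation, this,
    fun δ hδ => (hS δ hδ).posSemidef_algebraMap_sub S.norm_measure_le_variation⟩

end MeasureTheory.VectorMeasure

/-- **Jordan decomposition for matrix measure-charges (Theorem 5,
finite-dimensional case).**
Every countably additive measure-charge on the Borel sets of `ℝ` with Hermitian
`n × n` matrix values can be expressed as the difference `S = S₁ - S₂` of two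
nonnegative matrix measures. -/
theorem stmt_14 (n : ℕ)
    (S : VectorMeasure ℝ (Matrix (Fin n) (Fin n) ℂ))
    (hherm : ∀ δ : Set ℝ, MeasurableSet δ → (S δ).IsHermitian) :
    ∃ S₁ S₂ : VectorMeasure ℝ (Matrix (Fin n) (Fin n) ℂ),
      (∀ δ : Set ℝ, MeasurableSet δ → (S₁ δ).PosSemidef) ∧
      (∀ δ : Set ℝ, MeasurableSet δ → (S₂ δ).PosSemidef) ∧
      (∀ δ : Set ℝ, S δ = S₁ δ - S₂ δ) := by
  obtain ⟨ν, hν, hdom⟩ := S.exists_isFiniteMeasure_posSemidef_algebraMap_sub hherm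
  let S₁ : VectorMeasure ℝ (Matrix (Fin n) (Fin n) ℂ) :=
    ν.toSignedMeasure.mapRange (algebraMap ℝ _).toAddMonoidHom (continuous_algebraMap ℝ _)
  have hS₁ : ∀ δ, MeasurableSet δ → S₁ δ = algebraMap ℝ _ (ν.real δ) := fun δ hδ => by
    simp [S₁, VectorMeasure.mapRange_apply, Measure.toSignedMeasure_apply_measurable hδ]
  refine ⟨S₁, S₁ - S, fun δ hδ => ?_, fun δ hδ => ?_, fun δ => by simp⟩
  · rw [hS₁ δ hδ, Algebra.algebraMap_eq_smul_one]
    exact Matrix.PosSemidef.one.smul measureReal_nonneg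
  · rw [sub_apply, hS₁ δ hδ]
    exact hdom δ hδ
end
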